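/- arXiv:1301.3589 — 3 statements merged into one kernel-verified Lean document; each statement's English description precedes it below -/
import Mathlib

section
/- There exists a constant C > 0 independent of ε such that for all sufficiently small ε > 0 the restriction of the boundary datum U to Ω∖∪_i 𝒫_i^ε is admissible and satisfies ℰ_ε[U] ≤ C; consequently, any minimizer u_ε of ℰ_ε among admissible functions satisfies ℰ_ε[u_ε] ≤ C uniformly in ε. -/
open MeasureTheory Filter Metric Set
open scoped RealInnerProductSpace ENNReal NNReal Topology

noncomputable section

/-- Euclidean three-space. -/
abbrev E3 : Type := EuclideanSpace ℝ (Fin 3)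

/-- The closed prolate spheroid centered at the origin with semi-axis `A` along the
`x`- and `y`-directions and semi-axis `B` along the `z`-direction. -/
def sph (A B : ℝ) : Set E3 :=
  {x : E3 | (x 0) ^ 2 / A ^ 2 + (x 1) ^ 2 / A ^ 2 + (x 2) ^ 2 / B ^ 2 ≤ 1}

/-- The boundary surface of the spheroid `sph A B`. -/
def sphS (A B : ℝ) : Set E3 :=
  {x : E3 | (x 0) ^ 2 / A ^ 2 + (x 1) ^ 2 / A ^ 2 + (x 2) ^ 2 / B ^ 2 = 1}

/-- Gradient of the defining function of the spheroid (up to a factor `2`). -/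
def sphGrad (A B : ℝ) (x : E3) : E3 :=
  (WithLp.equiv 2 (Fin 3 → ℝ)).symm ![x 0 / A ^ 2, x 1 / A ^ 2, x 2 / B ^ 2]

/-- Outward unit normal to the surface of the spheroid `sph A B`. -/
def sphN (A B : ℝ) (x : E3) : E3 := ‖sphGrad A B x‖⁻¹ • sphGrad A B x

/-- A rotation of `ℝ³`: a linear isometry with determinant one. -/
def IsRotation (R : E3 ≃ₗᵢ[ℝ] E3) : Prop :=
  LinearMap.det (R.toLinearEquiv : E3 →ₗ[ℝ] E3) = 1

/-- A particle: the image of the reference spheroid `sph A B` under `y ↦ c + s • R y`. -/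
def part (A B : ℝ) (c : E3) (s : ℝ) (R : E3 ≃ₗᵢ[ℝ] E3) : Set E3 :=
  (fun y => c + s • R y) '' sph A B

/-- The boundary surface of a particle. -/
def partS (A B : ℝ) (c : E3) (s : ℝ) (R : E3 ≃ₗᵢ[ℝ] E3) : Set E3 :=
  (fun y => c + s • R y) '' sphS A B

/-- The outward unit normal on the surface of a particle. -/
def partN (A B : ℝ) (c : E3) (s : ℝ) (R : E3 ≃ₗᵢ[ℝ] E3) (y : E3) : E3 :=
  R (sphN A B (s⁻¹ • R.symm (y - c)))

/-- Geometric configuration of the dilute ferronematic composite from the paper: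
a bounded smooth domain `Ω ⊂ ℝ³`; a reference closed prolate spheroid `𝒫 = sph b a`
with semi-minor axis `b` and semi-major axis `a` (`0 < b < a`), long axis along `z`;
exponent `1 < α < 2`; constants `0 < d < D`, `g ∈ ℝ`; and, for each `0 < ε < ε₀`,
particles `𝒫ᵢ^ε = xᵢ^ε + ε^α Rᵢ^ε 𝒫` (`i = 1,…,N_ε`) whose centers are `dε`-separated,
at mutual distance at most `Dε`, with the closed balls of radius `dε/2` around the
centers pairwise disjoint and contained in `Ω`, and `N_ε ≤ N ε⁻³`. -/
structure Config where
  Ω : Set E3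
  a : ℝ
  b : ℝ
  α : ℝ
  d : ℝ
  D : ℝ
  g : ℝ
  ε₀ : ℝ
  Nε : ℝ → ℕ
  xc : (ε : ℝ) → Fin (Nε ε) → E3
  Rot : (ε : ℝ) → Fin (Nε ε) → E3 ≃ₗᵢ[ℝ] E3
  NN : ℝ
  hΩo : IsOpen Ω
  hΩne : Ω.Nonempty
  hΩb : Bornology.IsBounded Ω
  hb : 0 < b
  hba : b < a
  hα1 : 1 < α
  hα2 : α < 2
  hd : 0 < d
  hdD : d < D
  hε₀ : 0 < ε₀
  hRot : ∀ ε i, IsRotation (Rot ε i)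
  hsep_lo : ∀ ε, 0 < ε → ε < ε₀ → ∀ i j, i ≠ j → d * ε ≤ dist (xc ε i) (xc ε j)
  hsep_hi : ∀ ε, 0 < ε → ε < ε₀ → ∀ i j, i ≠ j → dist (xc ε i) (xc ε j) ≤ D * ε
  hdisj : ∀ ε, 0 < ε → ε < ε₀ → ∀ i j, i ≠ j →
    Disjoint (Metric.closedBall (xc ε i) (d * ε / 2)) (Metric.closedBall (xc ε j) (d * ε / 2))
  hball : ∀ ε, 0 < ε → ε < ε₀ → ∀ i, Metric.closedBall (xc ε i) (d * ε / 2) ⊆ Ω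
  hNN : 0 < NN
  hcount : ∀ ε, 0 < ε → ε < ε₀ → (Nε ε : ℝ) ≤ NN * ε⁻¹ ^ 3

namespace Config

variable (cfg : Config)

/-- The `i`-th particle `𝒫ᵢ^ε`. -/
def particle (ε : ℝ) (i : Fin (cfg.Nε ε)) : Set E3 :=
  part cfg.b cfg.a (cfg.xc ε i) (ε ^ cfg.α) (cfg.Rot ε i)

/-- The surface `∂𝒫ᵢ^ε` of the `i`-th particle. -/
def surf (ε : ℝ) (i : Fin (cfg.Nε ε)) : Set E3 :=
  partS cfg.b cfg.a (cfg.xc ε i) (ε ^ cfg.α) (cfg.Rot ε i)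

/-- The outward unit normal on the surface of the `i`-th particle. -/
def normal (ε : ℝ) (i : Fin (cfg.Nε ε)) (y : E3) : E3 :=
  partN cfg.b cfg.a (cfg.xc ε i) (ε ^ cfg.α) (cfg.Rot ε i) y

/-- The perforated domain `Ω ∖ ∪ᵢ 𝒫ᵢ^ε` occupied by the liquid crystal. -/
def dom (ε : ℝ) : Set E3 := cfg.Ω \ ⋃ i, cfg.particle ε i

/-- The anchoring surface energy `g_ε ∫_{∪ᵢ∂𝒫ᵢ^ε} (u·ν)² dσ`, `g_ε = g ε^{3−2α}`. -/
def surfE (ε : ℝ) (u : E3 → E3) : ℝ :=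
  cfg.g * ε ^ (3 - 2 * cfg.α) *
    ∑ i : Fin (cfg.Nε ε), ∫ y in cfg.surf ε i, ⟪u y, cfg.normal ε i y⟫ ^ 2 ∂μH[2]

/-- The liquid crystal energy
`ℰ_ε[u] = ∫_{Ω∖∪ᵢ𝒫ᵢ^ε} (|∇u|² + (1−|u|²)²) dV + g_ε ∫_{∪ᵢ∂𝒫ᵢ^ε} (u·ν)² dσ`. -/
def lcE (ε : ℝ) (u : E3 → E3) : ℝ :=
  (∫ x in cfg.dom ε, (‖fderiv ℝ u x‖ ^ 2 + (1 - ‖u x‖ ^ 2) ^ 2)) + cfg.surfE ε u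

end Config

/-- Membership in `H¹(s; ℝ³)` (as a class of everywhere-defined representatives):
continuity, differentiability on `s`, and square integrability of the function and of
its gradient on `s`. -/
def H1on (s : Set E3) (u : E3 → E3) : Prop :=
  Continuous u ∧ (∀ x ∈ s, DifferentiableAt ℝ u x) ∧
    IntegrableOn (fun x => ‖u x‖ ^ 2) s ∧
    IntegrableOn (fun x => ‖fderiv ℝ u x‖ ^ 2) s

/-- Admissible functions for the variational problems: `H¹` regularity on the perforated
domain (together with the `L⁴` integrability granting a finite Ginzburg–Landau term) and
the Dirichlet condition `u = U` on `∂Ω`. -/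
def Config.Adm (cfg : Config) (U : E3 → E3) (ε : ℝ) (u : E3 → E3) : Prop :=
  H1on (cfg.dom ε) u ∧ IntegrableOn (fun x => ‖u x‖ ^ 4) (cfg.dom ε) ∧
    Set.EqOn u U (frontier cfg.Ω)


/-!
The boundary datum `U` and the bulk density `|∇U|² + (1 - |U|²)²` are bounded on a compact
neighbourhood of `Ω̄` that contains every particle, so the bulk term is bounded by a constant
times its volume. Each particle surface is the image of the reference surface `∂𝒫` under a
similarity of ratio `ε^α`, so its area is at most `ε^{2α} H²(∂𝒫)`, and `H²(∂𝒫)` is finite because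
`∂𝒫` is a `C¹` image of a compact parameter domain (spherical coordinates). With at most `N ε⁻³`
particles, the anchoring term is at most `|g| ε^{3-2α} · N ε⁻³ · M² ε^{2α} H²(∂𝒫) = |g| N M² H²(∂𝒫)`:
the scaling `g_ε = g ε^{3-2α}` exactly compensates the number and size of the particles.
A minimizer has energy at most that of the admissible competitor `U`.
-/

def sphMap (A B : ℝ) (p : Fin 2 → ℝ) : E3 :=
  !₂[A * (Real.cos (p 0) * Real.sin (p 1)), A * (Real.sin (p 0) * Real.sin (p 1)),
    B * Real.cos (p 1)]

lemma contDiff_sphMap (A B : ℝ) : ContDiff ℝ 1 (sphMap A B) := by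
  refine contDiff_piLp' (p := 2) fun i => ?_
  fin_cases i <;>
    simp only [sphMap, Fin.zero_eta, Fin.mk_one, Fin.reduceFinMk, Matrix.cons_val] <;> fun_prop

lemma sphS_subset_image_sphMap {A B : ℝ} (hA : A ≠ 0) (hB : B ≠ 0) :
    sphS A B ⊆ sphMap A B '' closedBall 0 Real.pi := by
  intro x (hx : _ = 1)
  set z : ℂ := ⟨x 0 / A, x 1 / A⟩
  set t := x 2 / B
  have hzt : ‖z‖ ^ 2 + t ^ 2 = 1 := by
    rw [Complex.sq_norm, Complex.normSq_apply, ← hx]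
    simp only [z, t]
    ring
  have ht : -1 ≤ t ∧ t ≤ 1 :=
    abs_le.mp ((sq_le_one_iff_abs_le_one t).mp (by nlinarith [sq_nonneg ‖z‖]))
  have hsin : Real.sin (Real.arccos t) = ‖z‖ := by
    rw [Real.sin_arccos, ← hzt, add_sub_cancel_right, Real.sqrt_sq (norm_nonneg z)]
  refine ⟨![z.arg, Real.arccos t], ?_, ?_⟩
  · rw [mem_closedBall_zero_iff, pi_norm_le_iff_of_nonneg Real.pi_pos.le, Fin.forall_fin_two]
    exact ⟨Complex.abs_arg_le_pi z,
      (abs_of_nonneg (Real.arccos_nonneg t)).trans_le (Real.arccos_le_pi t)⟩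
  · ext i
    fin_cases i
    · simp [sphMap, hsin, mul_comm (Real.cos _), Complex.norm_mul_cos_arg, z,
        mul_div_cancel₀ _ hA]
    · simp [sphMap, hsin, mul_comm (Real.sin _), Complex.norm_mul_sin_arg, z,
        mul_div_cancel₀ _ hA]
    · simp [sphMap, Real.cos_arccos ht.1 ht.2, t, mul_div_cancel₀ _ hB]

lemma ContDiff.hausdorffMeasure_image_lt_top {ι F : Type*} [Fintype ι] [NormedAddCommGroup F]
    [NormedSpace ℝ F] [MeasurableSpace F] [BorelSpace F] {f : (ι → ℝ) → F}
    (hf : ContDiff ℝ 1 f) {s : Set (ι → ℝ)} (hs : IsCompact s) :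
    μH[Fintype.card ι] (f '' s) < ⊤ := by
  obtain ⟨K, hK⟩ := hf.locallyLipschitz.locallyLipschitzOn.exists_lipschitzOnWith_of_compact hs
  refine (hK.hausdorffMeasure_image_le (Nat.cast_nonneg _)).trans_lt ?_
  rw [hausdorffMeasure_pi_real]
  exact ENNReal.mul_lt_top (by simp) hs.measure_lt_top

lemma hausdorffMeasure_sphS_lt_top {A B : ℝ} (hA : A ≠ 0) (hB : B ≠ 0) :
    μH[2] (sphS A B) < ⊤ := by
  refine (measure_mono (sphS_subset_image_sphMap hA hB)).trans_lt ?_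
  simpa using
    (contDiff_sphMap A B).hausdorffMeasure_image_lt_top (isCompact_closedBall 0 Real.pi)

lemma lipschitzWith_add_smul_linearIsometry {V : Type*} [NormedAddCommGroup V]
    [NormedSpace ℝ V] (c : V) (s : ℝ) (R : V →ₗᵢ[ℝ] V) :
    LipschitzWith ‖s‖₊ (fun y => c + s • R y) := by
  refine LipschitzWith.of_dist_le_mul fun x y => ?_
  rw [dist_add_left, dist_smul₀, R.dist_map, coe_nnnorm]

lemma hausdorffMeasure_partS_le (A B : ℝ) (c : E3) (s : ℝ) (R : E3 ≃ₗᵢ[ℝ] E3) :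
    μH[2] (partS A B c s R) ≤ (‖s‖₊ : ℝ≥0∞) ^ (2 : ℝ) * μH[2] (sphS A B) :=
  (lipschitzWith_add_smul_linearIsometry c s R.toLinearIsometry).hausdorffMeasure_image_le
    zero_le_two _

lemma hausdorffMeasure_partS_lt_top {A B : ℝ} (hA : A ≠ 0) (hB : B ≠ 0) (c : E3) (s : ℝ)
    (R : E3 ≃ₗᵢ[ℝ] E3) : μH[2] (partS A B c s R) < ⊤ :=
  (hausdorffMeasure_partS_le A B c s R).trans_lt
    (ENNReal.mul_lt_top (by simp) (hausdorffMeasure_sphS_lt_top hA hB))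

lemma measureReal_partS_le {A B : ℝ} (hA : A ≠ 0) (hB : B ≠ 0) (c : E3) (s : ℝ)
    (R : E3 ≃ₗᵢ[ℝ] E3) :
    μH[2].real (partS A B c s R) ≤ s ^ 2 * μH[2].real (sphS A B) := by
  have h := ENNReal.toReal_mono
    (ENNReal.mul_lt_top (by simp) (hausdorffMeasure_sphS_lt_top hA hB)).ne
    (hausdorffMeasure_partS_le A B c s R)
  rwa [ENNReal.toReal_mul, ← ENNReal.toReal_rpow, ENNReal.coe_toReal, coe_nnnorm,
    Real.norm_eq_abs, Real.rpow_two, sq_abs] at h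

lemma sphS_subset_sph (A B : ℝ) : sphS A B ⊆ sph A B := fun _ hx => hx.le

lemma sph_subset_closedBall {A B : ℝ} (hA : 0 < A) (hAB : A ≤ B) :
    sph A B ⊆ closedBall 0 B := by
  intro x (hx : x 0 ^ 2 / A ^ 2 + x 1 ^ 2 / A ^ 2 + x 2 ^ 2 / B ^ 2 ≤ 1)
  have hB : 0 < B := hA.trans_le hAB
  have hcoord (i : Fin 3) : x i ^ 2 / B ^ 2 ≤ x i ^ 2 / A ^ 2 :=
    div_le_div_of_nonneg_left (sq_nonneg _) (by positivity) (pow_le_pow_left₀ hA.le hAB 2)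
  have hsum : x 0 ^ 2 + x 1 ^ 2 + x 2 ^ 2 ≤ B ^ 2 := by
    rw [← div_le_one (by positivity), add_div, add_div]
    linarith [hcoord 0, hcoord 1]
  rw [mem_closedBall_zero_iff, EuclideanSpace.norm_eq, Fin.sum_univ_three,
    Real.sqrt_le_left hB.le]
  simpa only [Real.norm_eq_abs, sq_abs] using hsum

lemma part_subset_closedBall {A B : ℝ} (hA : 0 < A) (hAB : A ≤ B) (c : E3) {s : ℝ}
    (hs : 0 ≤ s) (R : E3 ≃ₗᵢ[ℝ] E3) : part A B c s R ⊆ closedBall c (s * B) := by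
  rintro _ ⟨y, hy, rfl⟩
  rw [mem_closedBall, dist_self_add_left, norm_smul, Real.norm_eq_abs, abs_of_nonneg hs,
    R.norm_map]
  exact mul_le_mul_of_nonneg_left
    (mem_closedBall_zero_iff.mp (sph_subset_closedBall hA hAB hy)) hs

lemma norm_partN_le_one (A B : ℝ) (c : E3) (s : ℝ) (R : E3 ≃ₗᵢ[ℝ] E3) (y : E3) :
    ‖partN A B c s R y‖ ≤ 1 := by
  rw [partN, R.norm_map, sphN, norm_smul, norm_inv, norm_norm]
  rcases eq_or_ne ‖sphGrad A B (s⁻¹ • R.symm (y - c))‖ 0 with h | h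
  · rw [h, inv_zero, zero_mul]
    exact zero_le_one
  · rw [inv_mul_cancel₀ h]

lemma setIntegral_inner_sq_le {X V : Type*} [MeasurableSpace X] [NormedAddCommGroup V]
    [InnerProductSpace ℝ V] {μ : Measure X} {s : Set X} (hs : μ s < ⊤) {u ν : X → V} {M : ℝ}
    (hu : ∀ x ∈ s, ‖u x‖ ≤ M) (hν : ∀ x ∈ s, ‖ν x‖ ≤ 1) :
    ∫ x in s, ⟪u x, ν x⟫ ^ 2 ∂μ ≤ M ^ 2 * μ.real s := by
  refine (Real.le_norm_self _).trans (norm_setIntegral_le_of_norm_le_const hs fun x hx => ?_)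
  have hinner : |⟪u x, ν x⟫| ≤ M := (abs_real_inner_le_norm _ _).trans
    ((mul_le_of_le_one_right (norm_nonneg _) (hν x hx)).trans (hu x hx))
  rw [norm_pow, Real.norm_eq_abs]
  exact pow_le_pow_left₀ (abs_nonneg _) hinner 2

lemma rpow_three_sub_two_mul_mul_rpow_sq {x : ℝ} (hx : 0 < x) (α : ℝ) :
    x ^ (3 - 2 * α) * (x ^ α) ^ 2 = x ^ 3 := by
  rw [← Real.rpow_mul_natCast hx.le, ← Real.rpow_add hx,
    show 3 - 2 * α + α * (2 : ℕ) = (3 : ℕ) by push_cast; ring, Real.rpow_natCast]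

namespace Config

variable (cfg : Config)

lemma dom_subset_closure (ε : ℝ) : cfg.dom ε ⊆ closure cfg.Ω :=
  sdiff_subset.trans subset_closure

lemma integrableOn_dom {f : E3 → ℝ} (hf : Continuous f) (ε : ℝ) :
    IntegrableOn f (cfg.dom ε) :=
  (hf.continuousOn.integrableOn_compact cfg.hΩb.isCompact_closure).mono_set
    (cfg.dom_subset_closure ε)

lemma adm_self {U : E3 → E3} (hU : ContDiff ℝ 1 U) (ε : ℝ) : cfg.Adm U ε U :=
  ⟨⟨hU.continuous, fun x _ => (hU.differentiable one_ne_zero).differentiableAt,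
      cfg.integrableOn_dom (by fun_prop) ε,
      cfg.integrableOn_dom ((hU.continuous_fderiv one_ne_zero).norm.pow 2) ε⟩,
    cfg.integrableOn_dom (by fun_prop) ε, fun _ _ => rfl⟩

lemma integral_dom_le {f : E3 → ℝ} {K : Set E3} (hK : IsCompact K) (hΩK : cfg.Ω ⊆ K) {C : ℝ}
    (hC : ∀ x ∈ K, ‖f x‖ ≤ C) (ε : ℝ) : ∫ x in cfg.dom ε, f x ≤ C * volume.real K := by
  obtain ⟨x₀, hx₀⟩ := cfg.hΩne
  have hdomK : cfg.dom ε ⊆ K := sdiff_subset.trans hΩK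
  calc ∫ x in cfg.dom ε, f x
      ≤ C * volume.real (cfg.dom ε) := (Real.le_norm_self _).trans
        (norm_setIntegral_le_of_norm_le_const
          ((measure_mono hdomK).trans_lt hK.measure_lt_top) fun x hx => hC x (hdomK hx))
    _ ≤ C * volume.real K := mul_le_mul_of_nonneg_left
        (measureReal_mono hdomK hK.measure_lt_top.ne) ((norm_nonneg _).trans (hC x₀ (hΩK hx₀)))

lemma center_mem {ε : ℝ} (hε : 0 < ε) (hε₀ : ε < cfg.ε₀) (i : Fin (cfg.Nε ε)) :
    cfg.xc ε i ∈ cfg.Ω :=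
  cfg.hball ε hε hε₀ i (mem_closedBall_self (by have := cfg.hd; positivity))

lemma surf_subset_cthickening {ε : ℝ} (hε : 0 < ε) (hε₀ : ε < cfg.ε₀) (i : Fin (cfg.Nε ε)) :
    cfg.surf ε i ⊆ cthickening (cfg.ε₀ ^ cfg.α * cfg.a) cfg.Ω := by
  have ha : 0 < cfg.a := cfg.hb.trans cfg.hba
  calc cfg.surf ε i ⊆ cfg.particle ε i := image_mono (sphS_subset_sph _ _)
    _ ⊆ closedBall (cfg.xc ε i) (ε ^ cfg.α * cfg.a) :=
      part_subset_closedBall cfg.hb cfg.hba.le _ (Real.rpow_nonneg hε.le _) _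
    _ ⊆ closedBall (cfg.xc ε i) (cfg.ε₀ ^ cfg.α * cfg.a) := closedBall_subset_closedBall
      (mul_le_mul_of_nonneg_right
        (Real.rpow_le_rpow hε.le hε₀.le (zero_le_one.trans cfg.hα1.le)) ha.le)
    _ ⊆ cthickening (cfg.ε₀ ^ cfg.α * cfg.a) cfg.Ω :=
      closedBall_subset_cthickening (cfg.center_mem hε hε₀ i) _

lemma surfE_le {ε : ℝ} (hε : 0 < ε) (hε₀ : ε < cfg.ε₀) {u : E3 → E3} {M : ℝ}
    (hu : ∀ i, ∀ y ∈ cfg.surf ε i, ‖u y‖ ≤ M) :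
    cfg.surfE ε u ≤ |cfg.g| * cfg.NN * M ^ 2 * μH[2].real (sphS cfg.b cfg.a) := by
  set T := μH[2].real (sphS cfg.b cfg.a)
  set S := ∑ i : Fin (cfg.Nε ε), ∫ y in cfg.surf ε i, ⟪u y, cfg.normal ε i y⟫ ^ 2 ∂μH[2]
  have hb : cfg.b ≠ 0 := cfg.hb.ne'
  have ha : cfg.a ≠ 0 := (cfg.hb.trans cfg.hba).ne'
  have hεα : 0 ≤ ε ^ (3 - 2 * cfg.α) := Real.rpow_nonneg hε.le _
  have hS0 : 0 ≤ S := Finset.sum_nonneg fun i _ => integral_nonneg fun y => sq_nonneg _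
  have hS : S ≤ cfg.Nε ε * (M ^ 2 * ((ε ^ cfg.α) ^ 2 * T)) := by
    have hsurf (i : Fin (cfg.Nε ε)) :
        ∫ y in cfg.surf ε i, ⟪u y, cfg.normal ε i y⟫ ^ 2 ∂μH[2] ≤
          M ^ 2 * ((ε ^ cfg.α) ^ 2 * T) :=
      (setIntegral_inner_sq_le (hausdorffMeasure_partS_lt_top hb ha _ _ _) (hu i)
        fun y _ => norm_partN_le_one _ _ _ _ _ y).trans
        (mul_le_mul_of_nonneg_left (measureReal_partS_le hb ha _ _ _) (sq_nonneg M))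
    simpa using Finset.sum_le_sum fun i (_ : i ∈ Finset.univ) => hsurf i
  calc cfg.surfE ε u = cfg.g * ε ^ (3 - 2 * cfg.α) * S := rfl
    _ ≤ |cfg.g| * ε ^ (3 - 2 * cfg.α) *
          ((cfg.NN * ε⁻¹ ^ 3) * (M ^ 2 * ((ε ^ cfg.α) ^ 2 * T))) :=
      mul_le_mul (mul_le_mul_of_nonneg_right (le_abs_self _) hεα)
        (hS.trans (mul_le_mul_of_nonneg_right (cfg.hcount ε hε hε₀) (by positivity))) hS0
        (by positivity)
    _ = |cfg.g| * cfg.NN * M ^ 2 * T * (ε ^ (3 - 2 * cfg.α) * (ε ^ cfg.α) ^ 2 * ε⁻¹ ^ 3) := by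
      ring
    _ = |cfg.g| * cfg.NN * M ^ 2 * T := by
      rw [rpow_three_sub_two_mul_mul_rpow_sq hε, ← mul_pow, mul_inv_cancel₀ hε.ne', one_pow,
        mul_one]

end Config

/-- uniform energy bound via the boundary datum. There is `C > 0`
independent of `ε` such that for all sufficiently small `ε > 0` the restriction of the
boundary datum `U` to `Ω∖∪ᵢ𝒫ᵢ^ε` is admissible and satisfies `ℰ_ε[U] ≤ C`; consequently
any minimizer `u_ε` of `ℰ_ε` among admissible functions satisfies `ℰ_ε[u_ε] ≤ C`
uniformly in `ε`. -/
theorem stmt2 (cfg : Config) (U : E3 → E3) (hU : ContDiff ℝ 1 U) :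
    ∃ C : ℝ, 0 < C ∧ ∃ ε₁ : ℝ, 0 < ε₁ ∧ ε₁ ≤ cfg.ε₀ ∧
      ∀ ε : ℝ, 0 < ε → ε < ε₁ →
        cfg.Adm U ε U ∧ cfg.lcE ε U ≤ C ∧
        ∀ u : E3 → E3, cfg.Adm U ε u →
          (∀ v : E3 → E3, cfg.Adm U ε v → cfg.lcE ε u ≤ cfg.lcE ε v) →
          cfg.lcE ε u ≤ C := by
  set K := cthickening (cfg.ε₀ ^ cfg.α * cfg.a) cfg.Ω
  have hK : IsCompact K :=
    isCompact_of_isClosed_isBounded isClosed_cthickening cfg.hΩb.cthickening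
  obtain ⟨M, hM⟩ := hK.exists_bound_of_continuousOn hU.continuous.continuousOn
  have hbulk : Continuous fun x => ‖fderiv ℝ U x‖ ^ 2 + (1 - ‖U x‖ ^ 2) ^ 2 := by
    have := hU.continuous_fderiv one_ne_zero
    fun_prop
  obtain ⟨M', hM'⟩ := hK.exists_bound_of_continuousOn hbulk.continuousOn
  set C := M' * volume.real K + |cfg.g| * cfg.NN * M ^ 2 * μH[2].real (sphS cfg.b cfg.a)
  have hE (ε : ℝ) (hε : 0 < ε) (hε₀ : ε < cfg.ε₀) : cfg.lcE ε U ≤ max C 1 :=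
    le_max_of_le_left <| add_le_add
      (cfg.integral_dom_le hK (self_subset_cthickening _) hM' ε)
      (cfg.surfE_le hε hε₀ fun i y hy => hM y (cfg.surf_subset_cthickening hε hε₀ i hy))
  refine ⟨max C 1, lt_max_of_lt_right one_pos, cfg.ε₀, cfg.hε₀, le_rfl, fun ε hε hε₀ => ?_⟩
  exact ⟨cfg.adm_self hU ε, hE ε hε hε₀,
    fun u _ hmin => (hmin U (cfg.adm_self hU ε)).trans (hE ε hε hε₀)⟩
end
end

section
/- Fix κ with 1 < κ < α, a cutoff function φ ∈ C^∞([0,∞)) with φ(t) = 1 for t < 1/2 and φ(t) = 0 for t > 1, a function w ∈ C^∞(cl Ω; ℝ³), and K > 0. For each small ε > 0 suppose that for every i = 1,…,N_ε a function u_i^ε ∈ H¹(B_{ε^κ}(x_i^ε)∖𝒫_i^ε; ℝ³) satisfies ∫_{B_{ε^κ}(x_i^ε)∖𝒫_i^ε} |∇u_i^ε|² dV ≤ K ε^{6−α} and ∫_{B_{ε^κ}(x_i^ε)∖𝒫_i^ε} |u_i^ε − w(x_i^ε)|² dV ≤ K ε^{6+α}, and define z^ε = Σ_i (u_i^ε −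 w) φ(|x − x_i^ε|/ε^κ) on Ω∖∪_i 𝒫_i^ε. Then there is C > 0 independent of ε such that for all sufficiently small ε, ∫_{Ω∖∪_i 𝒫_i^ε} |∇z^ε|² dV ≤ C ε^{min{3−α, 3(κ−1)}}; in particular this integral tends to 0 as ε → 0. -/
open MeasureTheory Filter Metric Set
open scoped RealInnerProductSpace ENNReal NNReal Topology

noncomputable section

/-! ### Auxiliary lemmas for `stmt10` -/

lemma stmt10_sph_subset {A B : ℝ} (hA : 0 < A) (hB : 0 < B) :
    sph A B ⊆ closedBall (0:E3) (A + A + B) := by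
  intro x hx
  simp only [sph, mem_setOf_eq] at hx
  have p0 : 0 ≤ (x 0) ^ 2 / A ^ 2 := by positivity
  have p1 : 0 ≤ (x 1) ^ 2 / A ^ 2 := by positivity
  have p2 : 0 ≤ (x 2) ^ 2 / B ^ 2 := by positivity
  have h0 : (x 0) ^ 2 ≤ A ^ 2 := by
    rw [← div_le_one (by positivity : (0:ℝ) < A ^ 2)]; linarith
  have h1 : (x 1) ^ 2 ≤ A ^ 2 := by
    rw [← div_le_one (by positivity : (0:ℝ) < A ^ 2)]; linarith
  have h2 : (x 2) ^ 2 ≤ B ^ 2 := by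
    rw [← div_le_one (by positivity : (0:ℝ) < B ^ 2)]; linarith
  have hn : ‖x‖ ≤ A + A + B := by
    rw [EuclideanSpace.norm_eq]
    rw [show (Finset.univ : Finset (Fin 3)) = {0, 1, 2} by decide]
    rw [Finset.sum_insert (by decide), Finset.sum_insert (by decide), Finset.sum_singleton]
    have : ‖x 0‖ ^ 2 + ‖x 1‖ ^ 2 + ‖x 2‖ ^ 2 ≤ (A + A + B) ^ 2 := by
      simp only [Real.norm_eq_abs, sq_abs]; nlinarith
    calc Real.sqrt (‖x 0‖ ^ 2 + (‖x 1‖ ^ 2 + ‖x 2‖ ^ 2))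
        ≤ Real.sqrt ((A + A + B) ^ 2) := Real.sqrt_le_sqrt (by linarith)
      _ = A + A + B := Real.sqrt_sq (by linarith)
  simpa [mem_closedBall, dist_eq_norm] using hn

lemma stmt10_sph_isCompact {A B : ℝ} (hA : 0 < A) (hB : 0 < B) : IsCompact (sph A B) := by
  refine (isCompact_closedBall (0:E3) (A + A + B)).of_isClosed_subset ?_ (stmt10_sph_subset hA hB)
  have hc : Continuous fun x : E3 => (x 0) ^ 2 / A ^ 2 + (x 1) ^ 2 / A ^ 2 + (x 2) ^ 2 / B ^ 2 := by
    have h0 : Continuous fun x : E3 => x 0 := (EuclideanSpace.proj (0 : Fin 3)).continuous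
    have h1 : Continuous fun x : E3 => x 1 := (EuclideanSpace.proj (1 : Fin 3)).continuous
    have h2 : Continuous fun x : E3 => x 2 := (EuclideanSpace.proj (2 : Fin 3)).continuous
    fun_prop
  exact isClosed_le hc continuous_const

lemma stmt10_part_isCompact {A B : ℝ} (hA : 0 < A) (hB : 0 < B) (c : E3) (s : ℝ)
    (R : E3 ≃ₗᵢ[ℝ] E3) : IsCompact (part A B c s R) :=
  (stmt10_sph_isCompact hA hB).image (by fun_prop)

lemma stmt10_part_subset {A B : ℝ} (hA : 0 < A) (hB : 0 < B) (c : E3) {s : ℝ} (hs : 0 ≤ s)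
    (R : E3 ≃ₗᵢ[ℝ] E3) : part A B c s R ⊆ closedBall c (s * (A + A + B)) := by
  rintro _ ⟨x, hx, rfl⟩
  have hn : ‖x‖ ≤ A + A + B := by
    have := stmt10_sph_subset hA hB hx
    simpa [mem_closedBall, dist_eq_norm] using this
  have hd : dist (c + s • R x) c = s * ‖x‖ := by
    rw [dist_eq_norm]
    simp [norm_smul, abs_of_nonneg hs, R.norm_map]
  rw [mem_closedBall, hd]
  exact mul_le_mul_of_nonneg_left hn hs

lemma stmt10_phi_lemmas (φ : ℝ → ℝ) (hφ : ContDiff ℝ (⊤ : ℕ∞) φ)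
    (hφ1 : ∀ t : ℝ, t < 1 / 2 → φ t = 1) (hφ0 : ∀ t : ℝ, 1 < t → φ t = 0) :
    ∃ L : ℝ, 0 ≤ L ∧ LipschitzWith L.toNNReal φ ∧ (∀ t : ℝ, 0 ≤ t → |φ t| ≤ 1 + 2 * L) := by
  have hd0 : ∀ t : ℝ, t < 1/2 → deriv φ t = 0 := by
    intro t ht
    have hev : φ =ᶠ[nhds t] fun _ => (1:ℝ) :=
      eventually_of_mem (isOpen_Iio.mem_nhds (by simpa using ht)) fun y hy => hφ1 y hy
    rw [hev.deriv_eq, deriv_const]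
  have hd1 : ∀ t : ℝ, 1 < t → deriv φ t = 0 := by
    intro t ht
    have hev : φ =ᶠ[nhds t] fun _ => (0:ℝ) :=
      eventually_of_mem (isOpen_Ioi.mem_nhds (by simpa using ht)) fun y hy => hφ0 y hy
    rw [hev.deriv_eq, deriv_const]
  obtain ⟨Cb, hCb⟩ := (isCompact_Icc (a := (0:ℝ)) (b := 2)).exists_bound_of_continuousOn
    ((hφ.continuous_deriv (by simp)).continuousOn)
  have hlip : LipschitzWith (max Cb 0).toNNReal φ := by
    refine lipschitzWith_of_nnnorm_deriv_le (hφ.differentiable (by simp)) fun t => ?_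
    rw [← NNReal.coe_le_coe, coe_nnnorm, Real.coe_toNNReal _ (le_max_right Cb 0)]
    by_cases h0 : t < 1/2
    · rw [hd0 t h0]; simp
    by_cases h1 : 1 < t
    · rw [hd1 t h1]; simp
    · exact le_trans (hCb t ⟨by linarith, by linarith⟩) (le_max_left _ _)
  refine ⟨max Cb 0, le_max_right _ _, hlip, ?_⟩
  intro t ht
  by_cases h1 : 1 < t
  · rw [hφ0 t h1]; simp; positivity
  · have h2 : φ 2 = 0 := hφ0 2 (by norm_num)
    have hdd := hlip.dist_le_mul t 2
    rw [Real.coe_toNNReal _ (le_max_right Cb 0), Real.dist_eq, h2, Real.dist_eq] at hdd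
    have habs : |t - 2| ≤ 2 := by rw [abs_le]; constructor <;> linarith
    calc |φ t| = |φ t - 0| := by ring_nf
      _ ≤ max Cb 0 * |t - 2| := hdd
      _ ≤ max Cb 0 * 2 := mul_le_mul_of_nonneg_left habs (le_max_right _ _)
      _ ≤ 1 + 2 * max Cb 0 := by linarith [le_max_right Cb 0]

lemma stmt10_phii_lip {φ : ℝ → ℝ} {L : ℝ} (hL : 0 ≤ L) (hφlip : LipschitzWith L.toNNReal φ)
    (c : E3) {r : ℝ} (hr : 0 < r) :
    LipschitzWith (L / r).toNNReal (fun y : E3 => φ (‖y - c‖ / r)) := by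
  refine LipschitzWith.of_dist_le_mul fun y z => ?_
  have h1 := hφlip.dist_le_mul (‖y - c‖ / r) (‖z - c‖ / r)
  rw [Real.coe_toNNReal _ hL] at h1
  rw [Real.coe_toNNReal _ (by positivity : (0:ℝ) ≤ L / r)]
  refine h1.trans ?_
  rw [Real.dist_eq, div_sub_div_same, abs_div, abs_of_pos hr]
  have h2 : |‖y - c‖ - ‖z - c‖| ≤ ‖y - z‖ := by
    have := abs_norm_sub_norm_le (y - c) (z - c)
    simpa using this
  rw [dist_eq_norm, div_mul_eq_mul_div, mul_div_assoc]
  gcongr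

lemma stmt10_phii_fderiv_bound {φ : ℝ → ℝ} {L : ℝ} (hL : 0 ≤ L)
    (hφlip : LipschitzWith L.toNNReal φ) (c : E3) {r : ℝ} (hr : 0 < r) (x : E3) :
    ‖fderiv ℝ (fun y : E3 => φ (‖y - c‖ / r)) x‖ ≤ L / r := by
  have := norm_fderiv_le_of_lipschitz ℝ (stmt10_phii_lip hL hφlip c hr) (x₀ := x)
  rwa [Real.coe_toNNReal _ (by positivity : (0:ℝ) ≤ L / r)] at this

lemma stmt10_phii_diff {φ : ℝ → ℝ} (hφ : ContDiff ℝ (⊤ : ℕ∞) φ)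
    (hφ1 : ∀ t : ℝ, t < 1 / 2 → φ t = 1)
    (c : E3) {r : ℝ} (hr : 0 < r) (x : E3) :
    DifferentiableAt ℝ (fun y : E3 => φ (‖y - c‖ / r)) x := by
  by_cases h : ‖x - c‖ < r / 2
  · refine (differentiableAt_const (1:ℝ)).congr_of_eventuallyEq ?_
    have hopen : IsOpen {y : E3 | ‖y - c‖ < r / 2} :=
      isOpen_lt (continuous_id.sub continuous_const).norm continuous_const
    refine eventually_of_mem (hopen.mem_nhds h) fun y hy => ?_
    exact hφ1 _ (by rw [div_lt_iff₀ hr] at *; nlinarith [hy.out])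
  · have hne : x - c ≠ 0 := by
      intro h0
      rw [h0] at h; simp at h; linarith
    have h1 : DifferentiableAt ℝ (fun y : E3 => y - c) x := differentiableAt_id.sub_const c
    have hnorm : DifferentiableAt ℝ (fun y : E3 => ‖y - c‖) x :=
      DifferentiableAt.norm (𝕜 := ℝ) h1 hne
    have houter : DifferentiableAt ℝ (fun t : ℝ => φ (t / r)) ‖x - c‖ :=
      ((hφ.differentiable (by simp)) _).comp _ (differentiableAt_id.div_const r)
    have := houter.comp x hnorm
    exact this

lemma stmt10_alg {D A B Mφ Mw Lk L2 : ℝ} (hD : 0 ≤ D)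
    (h : D ≤ Mφ * (A + Mw) + (Lk * B + L2 * Mw)) :
    D ^ 2 ≤ 4 * Mφ ^ 2 * A ^ 2 + 4 * Lk ^ 2 * B ^ 2 +
      (4 * Mφ ^ 2 * Mw ^ 2 + 4 * L2 ^ 2 * Mw ^ 2) := by
  have h1 : D ^ 2 ≤ (Mφ * (A + Mw) + (Lk * B + L2 * Mw)) ^ 2 := pow_le_pow_left₀ hD h 2
  have h2 : (Mφ * (A + Mw) + (Lk * B + L2 * Mw)) ^ 2 ≤
      2 * (Mφ * (A + Mw)) ^ 2 + 2 * (Lk * B + L2 * Mw) ^ 2 := by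
    nlinarith [sq_nonneg (Mφ * (A + Mw) - (Lk * B + L2 * Mw))]
  have h3 : (Mφ * (A + Mw)) ^ 2 ≤ 2 * Mφ ^ 2 * A ^ 2 + 2 * Mφ ^ 2 * Mw ^ 2 := by
    nlinarith [sq_nonneg (Mφ * A - Mφ * Mw)]
  have h4 : (Lk * B + L2 * Mw) ^ 2 ≤ 2 * Lk ^ 2 * B ^ 2 + 2 * L2 ^ 2 * Mw ^ 2 := by
    nlinarith [sq_nonneg (Lk * B - L2 * Mw)]
  linarith

set_option maxHeartbeats 1000000 in
/-- gradient estimate for the patched test function `z^ε`. Fix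
`1 < κ < α`, a smooth cutoff `φ` with `φ ≡ 1` on `[0,1/2)` and `φ ≡ 0` on `(1,∞)`, a
smooth `w` and `K > 0`. If for each small `ε` and each `i` the functions
`uᵢ^ε ∈ H¹(B_{ε^κ}(xᵢ^ε)∖𝒫ᵢ^ε; ℝ³)` satisfy `∫ |∇uᵢ^ε|² ≤ K ε^{6−α}` and
`∫ |uᵢ^ε − w(xᵢ^ε)|² ≤ K ε^{6+α}`, and
`z^ε = Σᵢ (uᵢ^ε − w) φ(|x − xᵢ^ε|/ε^κ)`, then there is `C > 0` independent of `ε`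
such that for all sufficiently small `ε`,
`∫_{Ω∖∪ᵢ𝒫ᵢ^ε} |∇z^ε|² dV ≤ C ε^{min{3−α, 3(κ−1)}}`; in particular this integral tends
to `0` as `ε → 0⁺`. -/
theorem stmt10 (cfg : Config) (κ : ℝ) (hκ1 : 1 < κ) (hκα : κ < cfg.α)
    (φ : ℝ → ℝ) (hφ : ContDiff ℝ (⊤ : ℕ∞) φ)
    (hφ1 : ∀ t : ℝ, t < 1 / 2 → φ t = 1) (hφ0 : ∀ t : ℝ, 1 < t → φ t = 0)
    (w : E3 → E3) (hw : ContDiff ℝ (⊤ : ℕ∞) w) (K : ℝ) (hK : 0 < K)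
    (uf : (ε : ℝ) → (i : Fin (cfg.Nε ε)) → E3 → E3)
    (hdiff : ∀ ε, 0 < ε → ε < cfg.ε₀ → ∀ i,
      ∀ x ∈ Metric.ball (cfg.xc ε i) (ε ^ κ) \ cfg.particle ε i,
        DifferentiableAt ℝ (uf ε i) x)
    (hint1 : ∀ ε, 0 < ε → ε < cfg.ε₀ → ∀ i,
      IntegrableOn (fun x => ‖fderiv ℝ (uf ε i) x‖ ^ 2)
        (Metric.ball (cfg.xc ε i) (ε ^ κ) \ cfg.particle ε i))
    (hint2 : ∀ ε, 0 < ε → ε < cfg.ε₀ → ∀ i,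
      IntegrableOn (fun x => ‖uf ε i x - w (cfg.xc ε i)‖ ^ 2)
        (Metric.ball (cfg.xc ε i) (ε ^ κ) \ cfg.particle ε i))
    (hgrad : ∀ ε, 0 < ε → ε < cfg.ε₀ → ∀ i,
      (∫ x in Metric.ball (cfg.xc ε i) (ε ^ κ) \ cfg.particle ε i,
          ‖fderiv ℝ (uf ε i) x‖ ^ 2) ≤ K * ε ^ (6 - cfg.α))
    (hval : ∀ ε, 0 < ε → ε < cfg.ε₀ → ∀ i,
      (∫ x in Metric.ball (cfg.xc ε i) (ε ^ κ) \ cfg.particle ε i,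
          ‖uf ε i x - w (cfg.xc ε i)‖ ^ 2) ≤ K * ε ^ (6 + cfg.α)) :
    ∃ C : ℝ, 0 < C ∧ ∃ ε₁ : ℝ, 0 < ε₁ ∧ ε₁ ≤ cfg.ε₀ ∧
      (∀ ε : ℝ, 0 < ε → ε < ε₁ →
        (∫ x in cfg.dom ε,
            ‖fderiv ℝ (fun y : E3 => ∑ i : Fin (cfg.Nε ε),
              φ (‖y - cfg.xc ε i‖ / ε ^ κ) • (uf ε i y - w y)) x‖ ^ 2) ≤
          C * ε ^ min (3 - cfg.α) (3 * (κ - 1))) ∧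
      Tendsto (fun ε =>
          ∫ x in cfg.dom ε,
            ‖fderiv ℝ (fun y : E3 => ∑ i : Fin (cfg.Nε ε),
              φ (‖y - cfg.xc ε i‖ / ε ^ κ) • (uf ε i y - w y)) x‖ ^ 2)
        (𝓝[>] (0 : ℝ)) (𝓝 0) := by
  classical
  -- cutoff constants
  obtain ⟨L, hL0, hφlip, hMφb⟩ := stmt10_phi_lemmas φ hφ hφ1 hφ0
  set Mφ : ℝ := 1 + 2 * L with hMφdef
  have hMφ1 : (1:ℝ) ≤ Mφ := by simp [hMφdef]; linarith
  have hMφ0 : (0:ℝ) ≤ Mφ := by linarith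
  -- bounds for w
  obtain ⟨RΩ, hRΩ⟩ := cfg.hΩb.subset_closedBall 0
  obtain ⟨Mw0, hMw0b⟩ := (isCompact_closedBall (0:E3) RΩ).exists_bound_of_continuousOn
    ((hw.continuous_fderiv (by simp)).continuousOn)
  set Mw : ℝ := max Mw0 0 with hMwdef
  have hMw0 : (0:ℝ) ≤ Mw := le_max_right _ _
  have hMw : ∀ x ∈ closedBall (0:E3) RΩ, ‖fderiv ℝ w x‖ ≤ Mw :=
    fun x hx => (hMw0b x hx).trans (le_max_left _ _)
  -- geometric constants
  set ra : ℝ := cfg.b + cfg.b + cfg.a with hradef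
  have hra : 0 < ra := by have := cfg.hb; have := cfg.hba; simp [hradef]; linarith
  set Vb : ℝ := (volume (ball (0:E3) 1)).toReal with hVbdef
  have hVb0 : 0 ≤ Vb := ENNReal.toReal_nonneg
  set δ : ℝ := min (3 - cfg.α) (3 * (κ - 1)) with hδdef
  have hδpos : 0 < δ := by
    have := cfg.hα2
    apply lt_min <;> linarith
  -- the constant C
  set c1 : ℝ := 4 * Mφ ^ 2 * K with hc1def
  set c2 : ℝ := 4 * L ^ 2 * K with hc2def
  set c3 : ℝ := (4 * Mφ ^ 2 * Mw ^ 2 + 4 * L ^ 2 * Mw ^ 2) * Vb with hc3def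
  have hc1 : 0 ≤ c1 := by positivity
  have hc2 : 0 ≤ c2 := by positivity
  have hc3 : 0 ≤ c3 := by positivity
  set C : ℝ := cfg.NN * (c1 + c2 + c3) + 1 with hCdef
  have hC : 0 < C := by
    have := cfg.hNN
    have h0 : 0 ≤ cfg.NN * (c1 + c2 + c3) := by positivity
    linarith
  clear_value Mφ Mw c1 c2 c3 C δ
  -- choice of ε₁
  have hκ0 : (0:ℝ) < κ - 1 := by linarith
  have hα0 : (0:ℝ) < cfg.α - 1 := by linarith [cfg.hα1]
  set A1 : ℝ := (cfg.d / 2) ^ (1 / (κ - 1)) with hA1def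
  set A2 : ℝ := (cfg.d / (2 * (ra + 1))) ^ (1 / (cfg.α - 1)) with hA2def
  have hA1pos : 0 < A1 := Real.rpow_pos_of_pos (by linarith [cfg.hd]) _
  have hA2pos : 0 < A2 := Real.rpow_pos_of_pos (div_pos cfg.hd (by linarith)) _
  set ε₁ : ℝ := min cfg.ε₀ (min 1 (min A1 A2)) with hε₁def
  have hε₁pos : 0 < ε₁ := by
    apply lt_min cfg.hε₀
    exact lt_min one_pos (lt_min hA1pos hA2pos)
  have hε₁le : ε₁ ≤ cfg.ε₀ := min_le_left _ _
  -- the main estimate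
  have main : ∀ ε : ℝ, 0 < ε → ε < ε₁ →
      (∫ x in cfg.dom ε,
          ‖fderiv ℝ (fun y : E3 => ∑ i : Fin (cfg.Nε ε),
            φ (‖y - cfg.xc ε i‖ / ε ^ κ) • (uf ε i y - w y)) x‖ ^ 2) ≤
        C * ε ^ δ := by
    intro ε hε0 hεlt
    have hε₀' : ε < cfg.ε₀ := hεlt.trans_le hε₁le
    have hεle1 : ε ≤ 1 :=
      (hεlt.trans_le ((min_le_right _ _).trans (min_le_left _ _))).le
    have hεA1 : ε < A1 :=
      hεlt.trans_le ((min_le_right _ _).trans ((min_le_right _ _).trans (min_le_left _ _)))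
    have hεA2 : ε < A2 :=
      hεlt.trans_le ((min_le_right _ _).trans ((min_le_right _ _).trans (min_le_right _ _)))
    have hεκpos : 0 < ε ^ κ := Real.rpow_pos_of_pos hε0 κ
    -- smallness consequences
    have hκd : ε ^ κ < cfg.d * ε / 2 := by
      have h1 : ε ^ (κ - 1) < cfg.d / 2 := by
        have h2 := Real.rpow_lt_rpow hε0.le hεA1 hκ0
        rwa [hA1def, ← Real.rpow_mul (by linarith [cfg.hd] : (0:ℝ) ≤ cfg.d / 2),
          one_div_mul_cancel hκ0.ne', Real.rpow_one] at h2
      have h3 : ε ^ κ = ε * ε ^ (κ - 1) := by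
        have h4 := Real.rpow_add hε0 1 (κ - 1)
        rw [show (1:ℝ) + (κ - 1) = κ by ring, Real.rpow_one] at h4
        exact h4
      calc ε ^ κ = ε * ε ^ (κ - 1) := h3
        _ < ε * (cfg.d / 2) := mul_lt_mul_of_pos_left h1 hε0
        _ = cfg.d * ε / 2 := by ring
    have hαd : ε ^ cfg.α * ra < cfg.d * ε / 2 := by
      have h1 : ε ^ (cfg.α - 1) < cfg.d / (2 * (ra + 1)) := by
        have h2 := Real.rpow_lt_rpow hε0.le hεA2 hα0
        rwa [hA2def, ← Real.rpow_mul (le_of_lt (div_pos cfg.hd (by linarith))),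
          one_div_mul_cancel hα0.ne', Real.rpow_one] at h2
      have h3 : ε ^ cfg.α = ε * ε ^ (cfg.α - 1) := by
        have h4 := Real.rpow_add hε0 1 (cfg.α - 1)
        rw [show (1:ℝ) + (cfg.α - 1) = cfg.α by ring, Real.rpow_one] at h4
        exact h4
      have h5 : ε ^ (cfg.α - 1) * (2 * (ra + 1)) < cfg.d :=
        (lt_div_iff₀ (by linarith : (0:ℝ) < 2 * (ra + 1))).1 h1
      have h6 : 0 < ε ^ (cfg.α - 1) := Real.rpow_pos_of_pos hε0 _
      have h7 : ε ^ (cfg.α - 1) * ra < cfg.d / 2 := by nlinarith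
      calc ε ^ cfg.α * ra = ε * (ε ^ (cfg.α - 1) * ra) := by rw [h3]; ring
        _ < ε * (cfg.d / 2) := mul_lt_mul_of_pos_left h7 hε0
        _ = cfg.d * ε / 2 := by ring
    have hεα0 : (0:ℝ) ≤ ε ^ cfg.α := (Real.rpow_pos_of_pos hε0 _).le
    -- basic facts about particles and balls
    have hab : (0:ℝ) < cfg.a := cfg.hb.trans cfg.hba
    have hPsub : ∀ i, cfg.particle ε i ⊆ closedBall (cfg.xc ε i) (ε ^ cfg.α * ra) :=
      fun i => stmt10_part_subset cfg.hb hab _ hεα0 _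
    have hPcomp : ∀ i, IsCompact (cfg.particle ε i) :=
      fun i => stmt10_part_isCompact cfg.hb hab _ _ _
    have hPm : ∀ i, MeasurableSet (cfg.particle ε i) :=
      fun i => (hPcomp i).isClosed.measurableSet
    have hSm : ∀ i, MeasurableSet (ball (cfg.xc ε i) (ε ^ κ) \ cfg.particle ε i) :=
      fun i => measurableSet_ball.diff (hPm i)
    have hdom_m : MeasurableSet (cfg.dom ε) :=
      cfg.hΩo.measurableSet.diff (MeasurableSet.iUnion fun i => hPm i)
    have hballΩ : ∀ i, ball (cfg.xc ε i) (ε ^ κ) ⊆ cfg.Ω := by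
      intro i y hy
      apply cfg.hball ε hε0 hε₀' i
      rw [mem_closedBall]
      exact le_of_lt (lt_trans (mem_ball.1 hy) hκd)
    have hSdom : ∀ i, ball (cfg.xc ε i) (ε ^ κ) \ cfg.particle ε i ⊆ cfg.dom ε := by
      rintro i y ⟨hyb, hyP⟩
      refine ⟨hballΩ i hyb, ?_⟩
      intro hyU
      obtain ⟨j, hyPj⟩ := mem_iUnion.1 hyU
      by_cases hji : j = i
      · exact hyP (hji ▸ hyPj)
      · have h1 := cfg.hsep_lo ε hε0 hε₀' i j (fun h => hji h.symm)
        have h2 : dist y (cfg.xc ε j) ≤ ε ^ cfg.α * ra := mem_closedBall.1 (hPsub j hyPj)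
        have h3 : dist y (cfg.xc ε i) < ε ^ κ := mem_ball.1 hyb
        have h4 := dist_triangle (cfg.xc ε i) y (cfg.xc ε j)
        have h6 : dist y (cfg.xc ε j) < cfg.d * ε / 2 := lt_of_le_of_lt h2 hαd
        have h7 : dist (cfg.xc ε i) y < cfg.d * ε / 2 := by
          rw [dist_comm]; exact h3.trans hκd
        linarith [h1, h4, h6, h7]
    -- vanishing of far-away terms
    have termzero : ∀ (x : E3) (j : Fin (cfg.Nε ε)), ε ^ κ < ‖x - cfg.xc ε j‖ →
        ∀ᶠ y in 𝓝 x, φ (‖y - cfg.xc ε j‖ / ε ^ κ) • (uf ε j y - w y) = 0 := by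
      intro x j hxj
      have hopen : IsOpen {y : E3 | ε ^ κ < ‖y - cfg.xc ε j‖} :=
        isOpen_lt continuous_const (continuous_id.sub continuous_const).norm
      filter_upwards [hopen.mem_nhds hxj] with y hy
      rw [hφ0 _ ((one_lt_div hεκpos).2 hy), zero_smul]
    -- the key pointwise bound on each ball
    have hpt : ∀ (i : Fin (cfg.Nε ε)), ∀ x ∈ ball (cfg.xc ε i) (ε ^ κ) \ cfg.particle ε i,
        ‖fderiv ℝ (fun y : E3 => ∑ i : Fin (cfg.Nε ε),
            φ (‖y - cfg.xc ε i‖ / ε ^ κ) • (uf ε i y - w y)) x‖ ^ 2 ≤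
          4 * Mφ ^ 2 * ‖fderiv ℝ (uf ε i) x‖ ^ 2 +
            4 * (L / ε ^ κ) ^ 2 * ‖uf ε i x - w (cfg.xc ε i)‖ ^ 2 +
            (4 * Mφ ^ 2 * Mw ^ 2 + 4 * L ^ 2 * Mw ^ 2) := by
      rintro i x ⟨hxb, hxP⟩
      have hxΩ : x ∈ cfg.Ω := hballΩ i hxb
      -- all other terms vanish near x
      have hevj : ∀ᶠ y in 𝓝 x, ∀ j : Fin (cfg.Nε ε), j ≠ i →
          φ (‖y - cfg.xc ε j‖ / ε ^ κ) • (uf ε j y - w y) = 0 := by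
        rw [eventually_all]
        intro j
        by_cases hji : j = i
        · exact Filter.Eventually.of_forall fun y h => absurd hji h
        · have hxj : ε ^ κ < ‖x - cfg.xc ε j‖ := by
            have h1 := cfg.hsep_lo ε hε0 hε₀' i j (fun h => hji h.symm)
            have h3 : dist x (cfg.xc ε i) < ε ^ κ := mem_ball.1 hxb
            have h4 := dist_triangle (cfg.xc ε i) x (cfg.xc ε j)
            have h5 := dist_comm (cfg.xc ε i) x
            rw [show ‖x - cfg.xc ε j‖ = dist x (cfg.xc ε j) from (dist_eq_norm _ _).symm]
            linarith
          exact (termzero x j hxj).mono fun y hy _ => hy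
      have hev : (fun y : E3 => ∑ j : Fin (cfg.Nε ε),
          φ (‖y - cfg.xc ε j‖ / ε ^ κ) • (uf ε j y - w y)) =ᶠ[𝓝 x]
          fun y => φ (‖y - cfg.xc ε i‖ / ε ^ κ) • (uf ε i y - w y) :=
        hevj.mono fun y hy => Fintype.sum_eq_single i fun j hj => hy j hj
      have hu : DifferentiableAt ℝ (uf ε i) x := hdiff ε hε0 hε₀' i x ⟨hxb, hxP⟩
      have hwd : DifferentiableAt ℝ w x := (hw.differentiable (by simp)) x
      have hv : DifferentiableAt ℝ (fun y => uf ε i y - w y) x := hu.sub hwd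
      have hφd : DifferentiableAt ℝ (fun y : E3 => φ (‖y - cfg.xc ε i‖ / ε ^ κ)) x :=
        stmt10_phii_diff hφ hφ1 (cfg.xc ε i) hεκpos x
      have hfd : fderiv ℝ (fun y : E3 => ∑ j : Fin (cfg.Nε ε),
          φ (‖y - cfg.xc ε j‖ / ε ^ κ) • (uf ε j y - w y)) x =
          φ (‖x - cfg.xc ε i‖ / ε ^ κ) • fderiv ℝ (fun y => uf ε i y - w y) x +
            (fderiv ℝ (fun y : E3 => φ (‖y - cfg.xc ε i‖ / ε ^ κ)) x).smulRight
              (uf ε i x - w x) := by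
        rw [hev.fderiv_eq]
        exact fderiv_smul hφd hv
      have hφx : |φ (‖x - cfg.xc ε i‖ / ε ^ κ)| ≤ Mφ := hMφb _ (by positivity)
      have hdφx : ‖fderiv ℝ (fun y : E3 => φ (‖y - cfg.xc ε i‖ / ε ^ κ)) x‖ ≤ L / ε ^ κ :=
        stmt10_phii_fderiv_bound hL0 hφlip (cfg.xc ε i) hεκpos x
      have hdwx : ‖fderiv ℝ w x‖ ≤ Mw := hMw x (hRΩ hxΩ)
      have hdvx : ‖fderiv ℝ (fun y => uf ε i y - w y) x‖ ≤ ‖fderiv ℝ (uf ε i) x‖ + Mw := by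
        rw [fderiv_fun_sub hu hwd]
        exact (norm_sub_le _ _).trans (by linarith)
      have hwlip : ‖w x - w (cfg.xc ε i)‖ ≤ Mw * ε ^ κ := by
        have hctr : cfg.xc ε i ∈ ball (cfg.xc ε i) (ε ^ κ) := mem_ball_self hεκpos
        have hlip := Convex.norm_image_sub_le_of_norm_fderiv_le (f := w)
          (fun y _ => (hw.differentiable (by simp)) y)
          (fun y hy => hMw y (hRΩ (hballΩ i hy))) (convex_ball _ _) hctr hxb
        have hxn : ‖x - cfg.xc ε i‖ ≤ ε ^ κ := by
          rw [← dist_eq_norm]; exact (mem_ball.1 hxb).le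
        calc ‖w x - w (cfg.xc ε i)‖ ≤ Mw * ‖x - cfg.xc ε i‖ := hlip
          _ ≤ Mw * ε ^ κ := mul_le_mul_of_nonneg_left hxn hMw0
      have hvx : ‖uf ε i x - w x‖ ≤ ‖uf ε i x - w (cfg.xc ε i)‖ + Mw * ε ^ κ := by
        have hsplit : uf ε i x - w x =
            (uf ε i x - w (cfg.xc ε i)) - (w x - w (cfg.xc ε i)) := by abel
        rw [hsplit]
        exact (norm_sub_le _ _).trans (by linarith)
      have hnorm : ‖fderiv ℝ (fun y : E3 => ∑ j : Fin (cfg.Nε ε),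
          φ (‖y - cfg.xc ε j‖ / ε ^ κ) • (uf ε j y - w y)) x‖ ≤
          Mφ * (‖fderiv ℝ (uf ε i) x‖ + Mw) +
            (L / ε ^ κ) * (‖uf ε i x - w (cfg.xc ε i)‖ + Mw * ε ^ κ) := by
        rw [hfd]
        refine (norm_add_le _ _).trans ?_
        have h1 : ‖φ (‖x - cfg.xc ε i‖ / ε ^ κ) • fderiv ℝ (fun y => uf ε i y - w y) x‖ ≤
            Mφ * (‖fderiv ℝ (uf ε i) x‖ + Mw) := by
          rw [norm_smul, Real.norm_eq_abs]
          exact mul_le_mul hφx hdvx (norm_nonneg _) hMφ0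
        have h2 : ‖(fderiv ℝ (fun y : E3 => φ (‖y - cfg.xc ε i‖ / ε ^ κ)) x).smulRight
            (uf ε i x - w x)‖ ≤
            (L / ε ^ κ) * (‖uf ε i x - w (cfg.xc ε i)‖ + Mw * ε ^ κ) := by
          rw [ContinuousLinearMap.norm_smulRight_apply]
          exact mul_le_mul hdφx hvx (norm_nonneg _) (by positivity)
        linarith
      have hLM : (L / ε ^ κ) * (Mw * ε ^ κ) = L * Mw := by
        field_simp
      have hD0 : 0 ≤ ‖fderiv ℝ (fun y : E3 => ∑ j : Fin (cfg.Nε ε),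
          φ (‖y - cfg.xc ε j‖ / ε ^ κ) • (uf ε j y - w y)) x‖ := norm_nonneg _
      have hnorm' : ‖fderiv ℝ (fun y : E3 => ∑ j : Fin (cfg.Nε ε),
          φ (‖y - cfg.xc ε j‖ / ε ^ κ) • (uf ε j y - w y)) x‖ ≤
          Mφ * (‖fderiv ℝ (uf ε i) x‖ + Mw) +
            ((L / ε ^ κ) * ‖uf ε i x - w (cfg.xc ε i)‖ + L * Mw) := by
        refine hnorm.trans (le_of_eq ?_)
        rw [mul_add (L / ε ^ κ) (‖uf ε i x - w (cfg.xc ε i)‖) (Mw * ε ^ κ), hLM]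
      exact stmt10_alg hD0 hnorm'
    -- abbreviations
    set F : E3 → E3 := fun y : E3 => ∑ i : Fin (cfg.Nε ε),
      φ (‖y - cfg.xc ε i‖ / ε ^ κ) • (uf ε i y - w y) with hFdef
    have hfm : Measurable fun x : E3 => ‖fderiv ℝ F x‖ ^ 2 :=
      (measurable_fderiv ℝ F).norm.pow_const 2
    set Hf : Fin (cfg.Nε ε) → E3 → ℝ := fun i x =>
      4 * Mφ ^ 2 * ‖fderiv ℝ (uf ε i) x‖ ^ 2 +
        4 * (L / ε ^ κ) ^ 2 * ‖uf ε i x - w (cfg.xc ε i)‖ ^ 2 +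
        (4 * Mφ ^ 2 * Mw ^ 2 + 4 * L ^ 2 * Mw ^ 2) with hHfdef
    have hH0 : ∀ i x, 0 ≤ Hf i x := by
      intro i x
      simp only [hHfdef]
      positivity
    have hvolS : ∀ i, volume (ball (cfg.xc ε i) (ε ^ κ) \ cfg.particle ε i) < ⊤ :=
      fun i => lt_of_le_of_lt (measure_mono diff_subset) measure_ball_lt_top
    have hHint : ∀ i, IntegrableOn (Hf i)
        (ball (cfg.xc ε i) (ε ^ κ) \ cfg.particle ε i) volume := by
      intro i
      exact (((hint1 ε hε0 hε₀' i).const_mul _).add ((hint2 ε hε0 hε₀' i).const_mul _)).add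
        (integrableOn_const (hvolS i).ne)
    -- volume bound for the small balls
    have hballvol : ∀ i, (volume (ball (cfg.xc ε i) (ε ^ κ) \ cfg.particle ε i)).toReal ≤
        Vb * ε ^ (3 * κ) := by
      intro i
      have h1 : (volume (ball (cfg.xc ε i) (ε ^ κ) \ cfg.particle ε i)).toReal ≤
          (volume (ball (cfg.xc ε i) (ε ^ κ))).toReal :=
        ENNReal.toReal_mono measure_ball_lt_top.ne (measure_mono diff_subset)
      have h2 : volume (ball (cfg.xc ε i) (ε ^ κ)) =
          ENNReal.ofReal ((ε ^ κ) ^ (3:ℕ)) * volume (ball (0:E3) 1) := by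
        rw [Measure.addHaar_ball volume _ hεκpos.le, finrank_euclideanSpace_fin]
      have h3 : ((ε ^ κ : ℝ)) ^ (3:ℕ) = ε ^ (3 * κ) := by
        rw [← Real.rpow_natCast (ε ^ κ) 3, ← Real.rpow_mul hε0.le, mul_comm]
        norm_num
      rw [h2, ENNReal.toReal_mul, ENNReal.toReal_ofReal (by positivity), h3] at h1
      exact h1.trans (le_of_eq (mul_comm _ _))
    -- the integral of Hf i
    have hrw2 : 4 * (L / ε ^ κ) ^ 2 * (K * ε ^ (6 + cfg.α)) = c2 * ε ^ (6 + cfg.α - 2 * κ) := by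
      rw [hc2def, div_pow]
      have hp : ((ε ^ κ : ℝ)) ^ (2:ℕ) = ε ^ (2 * κ) := by
        rw [← Real.rpow_natCast (ε ^ κ) 2, ← Real.rpow_mul hε0.le, mul_comm]
        norm_num
      have hsub : ε ^ (6 + cfg.α - 2 * κ) = ε ^ (6 + cfg.α) / ε ^ (2 * κ) :=
        Real.rpow_sub hε0 _ _
      rw [hp, hsub]
      have h2κ : (0:ℝ) < ε ^ (2 * κ) := Real.rpow_pos_of_pos hε0 _
      field_simp
    have hHI : ∀ i, (∫ x in ball (cfg.xc ε i) (ε ^ κ) \ cfg.particle ε i, Hf i x) ≤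
        c1 * ε ^ (6 - cfg.α) + c2 * ε ^ (6 + cfg.α - 2 * κ) + c3 * ε ^ (3 * κ) := by
      intro i
      have hi1 := (hint1 ε hε0 hε₀' i).const_mul (4 * Mφ ^ 2)
      have hi2 := (hint2 ε hε0 hε₀' i).const_mul (4 * (L / ε ^ κ) ^ 2)
      have hi3 : IntegrableOn (fun _ : E3 => (4 * Mφ ^ 2 * Mw ^ 2 + 4 * L ^ 2 * Mw ^ 2))
          (ball (cfg.xc ε i) (ε ^ κ) \ cfg.particle ε i) volume :=
        integrableOn_const (hvolS i).ne
      have hadd2 : (∫ x in ball (cfg.xc ε i) (ε ^ κ) \ cfg.particle ε i, Hf i x) =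
          (∫ x in ball (cfg.xc ε i) (ε ^ κ) \ cfg.particle ε i,
            (4 * Mφ ^ 2 * ‖fderiv ℝ (uf ε i) x‖ ^ 2 +
              4 * (L / ε ^ κ) ^ 2 * ‖uf ε i x - w (cfg.xc ε i)‖ ^ 2)) +
          (∫ _x in ball (cfg.xc ε i) (ε ^ κ) \ cfg.particle ε i,
            (4 * Mφ ^ 2 * Mw ^ 2 + 4 * L ^ 2 * Mw ^ 2)) :=
        integral_add (hi1.add hi2) hi3
      have hadd1 : (∫ x in ball (cfg.xc ε i) (ε ^ κ) \ cfg.particle ε i,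
            (4 * Mφ ^ 2 * ‖fderiv ℝ (uf ε i) x‖ ^ 2 +
              4 * (L / ε ^ κ) ^ 2 * ‖uf ε i x - w (cfg.xc ε i)‖ ^ 2)) =
          (∫ x in ball (cfg.xc ε i) (ε ^ κ) \ cfg.particle ε i,
            4 * Mφ ^ 2 * ‖fderiv ℝ (uf ε i) x‖ ^ 2) +
          (∫ x in ball (cfg.xc ε i) (ε ^ κ) \ cfg.particle ε i,
            4 * (L / ε ^ κ) ^ 2 * ‖uf ε i x - w (cfg.xc ε i)‖ ^ 2) :=
        integral_add hi1 hi2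
      rw [hadd2, hadd1, integral_const_mul, integral_const_mul, setIntegral_const, smul_eq_mul, measureReal_def]
      have b1 : 4 * Mφ ^ 2 * (∫ x in ball (cfg.xc ε i) (ε ^ κ) \ cfg.particle ε i,
          ‖fderiv ℝ (uf ε i) x‖ ^ 2) ≤ 4 * Mφ ^ 2 * (K * ε ^ (6 - cfg.α)) :=
        mul_le_mul_of_nonneg_left (hgrad ε hε0 hε₀' i) (by positivity)
      have b2 : 4 * (L / ε ^ κ) ^ 2 * (∫ x in ball (cfg.xc ε i) (ε ^ κ) \ cfg.particle ε i,
          ‖uf ε i x - w (cfg.xc ε i)‖ ^ 2) ≤ 4 * (L / ε ^ κ) ^ 2 * (K * ε ^ (6 + cfg.α)) :=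
        mul_le_mul_of_nonneg_left (hval ε hε0 hε₀' i) (by positivity)
      have b3 : (volume (ball (cfg.xc ε i) (ε ^ κ) \ cfg.particle ε i)).toReal *
          (4 * Mφ ^ 2 * Mw ^ 2 + 4 * L ^ 2 * Mw ^ 2) ≤ c3 * ε ^ (3 * κ) := by
        have h4 := mul_le_mul_of_nonneg_right (hballvol i)
          (by positivity : (0:ℝ) ≤ 4 * Mφ ^ 2 * Mw ^ 2 + 4 * L ^ 2 * Mw ^ 2)
        refine h4.trans (le_of_eq ?_)
        rw [hc3def]
        ring
      have b1' : 4 * Mφ ^ 2 * (K * ε ^ (6 - cfg.α)) = c1 * ε ^ (6 - cfg.α) := by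
        rw [hc1def]; ring
      linarith [b1, b2, b3, b1', hrw2]
    -- from the Bochner integral to lintegrals
    have hsum_nonneg : (0:ℝ) ≤ ∑ i : Fin (cfg.Nε ε),
        ∫ x in ball (cfg.xc ε i) (ε ^ κ) \ cfg.particle ε i, Hf i x :=
      Finset.sum_nonneg fun i _ => integral_nonneg (hH0 i)
    have hieq : (∫ x in cfg.dom ε, ‖fderiv ℝ F x‖ ^ 2) =
        (∫⁻ x in cfg.dom ε, ENNReal.ofReal (‖fderiv ℝ F x‖ ^ 2)).toReal :=
      integral_eq_lintegral_of_nonneg_ae (Filter.Eventually.of_forall fun x => by positivity)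
        hfm.aestronglyMeasurable
    have hsphere : ∀ᵐ x : E3, x ∉ ⋃ i, sphere (cfg.xc ε i) (ε ^ κ) :=
      measure_eq_zero_iff_ae_notMem.1 (measure_iUnion_null fun i => Measure.addHaar_sphere volume _ _)
    have hae : ∀ᵐ x ∂(volume.restrict (cfg.dom ε)), ENNReal.ofReal (‖fderiv ℝ F x‖ ^ 2) ≤
        ∑ i : Fin (cfg.Nε ε), (ball (cfg.xc ε i) (ε ^ κ) \ cfg.particle ε i).indicator
          (fun y => ENNReal.ofReal (‖fderiv ℝ F y‖ ^ 2)) x := by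
      rw [ae_restrict_iff' hdom_m]
      refine hsphere.mono fun x hxs hxdom => ?_
      by_cases hballx : ∃ i, x ∈ closedBall (cfg.xc ε i) (ε ^ κ)
      · obtain ⟨i, hi⟩ := hballx
        have hne : dist x (cfg.xc ε i) ≠ ε ^ κ := fun h => hxs (mem_iUnion.2 ⟨i, h⟩)
        have hxSi : x ∈ ball (cfg.xc ε i) (ε ^ κ) \ cfg.particle ε i :=
          ⟨mem_ball.2 (lt_of_le_of_ne (mem_closedBall.1 hi) hne),
            fun hP => hxdom.2 (mem_iUnion.2 ⟨i, hP⟩)⟩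
        have hsingle : (ball (cfg.xc ε i) (ε ^ κ) \ cfg.particle ε i).indicator
              (fun y => ENNReal.ofReal (‖fderiv ℝ F y‖ ^ 2)) x ≤
            ∑ j : Fin (cfg.Nε ε), (ball (cfg.xc ε j) (ε ^ κ) \ cfg.particle ε j).indicator
              (fun y => ENNReal.ofReal (‖fderiv ℝ F y‖ ^ 2)) x :=
          Finset.single_le_sum (f := fun j : Fin (cfg.Nε ε) =>
              (ball (cfg.xc ε j) (ε ^ κ) \ cfg.particle ε j).indicator
                (fun y => ENNReal.ofReal (‖fderiv ℝ F y‖ ^ 2)) x)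
            (fun j _ => zero_le) (Finset.mem_univ i)
        calc ENNReal.ofReal (‖fderiv ℝ F x‖ ^ 2) =
            (ball (cfg.xc ε i) (ε ^ κ) \ cfg.particle ε i).indicator
              (fun y => ENNReal.ofReal (‖fderiv ℝ F y‖ ^ 2)) x := by
              rw [indicator_of_mem hxSi]
          _ ≤ _ := hsingle
      · push_neg at hballx
        have hforall : ∀ j, ε ^ κ < ‖x - cfg.xc ε j‖ := by
          intro j
          have h := hballx j
          rw [mem_closedBall, dist_eq_norm] at h
          exact lt_of_not_ge h
        have hev0 : F =ᶠ[𝓝 x] fun _ => (0:E3) := by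
          have hall : ∀ᶠ y in 𝓝 x, ∀ j : Fin (cfg.Nε ε),
              φ (‖y - cfg.xc ε j‖ / ε ^ κ) • (uf ε j y - w y) = 0 :=
            eventually_all.2 fun j => termzero x j (hforall j)
          refine hall.mono fun y hy => ?_
          simp only [hFdef]
          exact Finset.sum_eq_zero fun j _ => hy j
        have h0 : fderiv ℝ F x = 0 := by
          rw [hev0.fderiv_eq]
          exact fderiv_const_apply 0
        simp [h0]
    have hl1 : (∫⁻ x in cfg.dom ε, ENNReal.ofReal (‖fderiv ℝ F x‖ ^ 2)) ≤
        ENNReal.ofReal (∑ i : Fin (cfg.Nε ε),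
          ∫ x in ball (cfg.xc ε i) (ε ^ κ) \ cfg.particle ε i, Hf i x) := by
      have step4 : ∀ i : Fin (cfg.Nε ε),
          (∫⁻ x in ball (cfg.xc ε i) (ε ^ κ) \ cfg.particle ε i,
            ENNReal.ofReal (‖fderiv ℝ F x‖ ^ 2)) ≤
          ENNReal.ofReal (∫ x in ball (cfg.xc ε i) (ε ^ κ) \ cfg.particle ε i, Hf i x) := by
        intro i
        have hmono : (∫⁻ x in ball (cfg.xc ε i) (ε ^ κ) \ cfg.particle ε i,
            ENNReal.ofReal (‖fderiv ℝ F x‖ ^ 2)) ≤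
            ∫⁻ x in ball (cfg.xc ε i) (ε ^ κ) \ cfg.particle ε i,
              ENNReal.ofReal (Hf i x) := by
          refine lintegral_mono_ae ?_
          rw [ae_restrict_iff' (hSm i)]
          exact Filter.Eventually.of_forall fun x hx =>
            ENNReal.ofReal_le_ofReal (hpt i x hx)
        rw [ofReal_integral_eq_lintegral_ofReal (hHint i)
          (Filter.Eventually.of_forall fun x => hH0 i x)]
        exact hmono
      calc (∫⁻ x in cfg.dom ε, ENNReal.ofReal (‖fderiv ℝ F x‖ ^ 2))
          ≤ ∫⁻ x in cfg.dom ε, ∑ i : Fin (cfg.Nε ε),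
              (ball (cfg.xc ε i) (ε ^ κ) \ cfg.particle ε i).indicator
                (fun y => ENNReal.ofReal (‖fderiv ℝ F y‖ ^ 2)) x := lintegral_mono_ae hae
        _ ≤ ∫⁻ x, ∑ i : Fin (cfg.Nε ε),
              (ball (cfg.xc ε i) (ε ^ κ) \ cfg.particle ε i).indicator
                (fun y => ENNReal.ofReal (‖fderiv ℝ F y‖ ^ 2)) x :=
            setLIntegral_le_lintegral _ _
        _ = ∑ i : Fin (cfg.Nε ε), ∫⁻ x in ball (cfg.xc ε i) (ε ^ κ) \ cfg.particle ε i,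
              ENNReal.ofReal (‖fderiv ℝ F x‖ ^ 2) := by
            rw [lintegral_finset_sum _ fun i _ =>
              (hfm.ennreal_ofReal).indicator (hSm i)]
            exact Finset.sum_congr rfl fun i _ => lintegral_indicator (hSm i) _
        _ ≤ ∑ i : Fin (cfg.Nε ε), ENNReal.ofReal
              (∫ x in ball (cfg.xc ε i) (ε ^ κ) \ cfg.particle ε i, Hf i x) :=
            Finset.sum_le_sum fun i _ => step4 i
        _ = ENNReal.ofReal (∑ i : Fin (cfg.Nε ε),
              ∫ x in ball (cfg.xc ε i) (ε ^ κ) \ cfg.particle ε i, Hf i x) :=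
            (ENNReal.ofReal_sum_of_nonneg fun i _ => integral_nonneg (hH0 i)).symm
    have hIle : (∫ x in cfg.dom ε, ‖fderiv ℝ F x‖ ^ 2) ≤ ∑ i : Fin (cfg.Nε ε),
        ∫ x in ball (cfg.xc ε i) (ε ^ κ) \ cfg.particle ε i, Hf i x := by
      rw [hieq]
      exact ENNReal.toReal_le_of_le_ofReal hsum_nonneg hl1
    -- summing up
    set Bε : ℝ := c1 * ε ^ (6 - cfg.α) + c2 * ε ^ (6 + cfg.α - 2 * κ) + c3 * ε ^ (3 * κ)
      with hBεdef
    have hBε0 : 0 ≤ Bε := by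
      have t1 : (0:ℝ) ≤ c1 * ε ^ (6 - cfg.α) :=
        mul_nonneg hc1 (Real.rpow_nonneg hε0.le _)
      have t2 : (0:ℝ) ≤ c2 * ε ^ (6 + cfg.α - 2 * κ) :=
        mul_nonneg hc2 (Real.rpow_nonneg hε0.le _)
      have t3 : (0:ℝ) ≤ c3 * ε ^ (3 * κ) :=
        mul_nonneg hc3 (Real.rpow_nonneg hε0.le _)
      rw [hBεdef]; linarith
    have hsum_le : (∑ i : Fin (cfg.Nε ε),
        ∫ x in ball (cfg.xc ε i) (ε ^ κ) \ cfg.particle ε i, Hf i x) ≤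
        (cfg.Nε ε : ℝ) * Bε := by
      calc (∑ i : Fin (cfg.Nε ε),
          ∫ x in ball (cfg.xc ε i) (ε ^ κ) \ cfg.particle ε i, Hf i x)
          ≤ ∑ _i : Fin (cfg.Nε ε), Bε := Finset.sum_le_sum fun i _ => hHI i
        _ = (cfg.Nε ε : ℝ) * Bε := by
            rw [Finset.sum_const, Finset.card_univ, Fintype.card_fin, nsmul_eq_mul]
    have hfin1 : (cfg.Nε ε : ℝ) * Bε ≤ (cfg.NN * ε⁻¹ ^ 3) * Bε :=
      mul_le_mul_of_nonneg_right (cfg.hcount ε hε0 hε₀') hBε0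
    -- rpow arithmetic
    have hinv : (ε⁻¹ : ℝ) ^ (3:ℕ) = ε ^ (-(3:ℝ)) := by
      rw [← Real.rpow_neg_one ε, ← Real.rpow_natCast (ε ^ (-1:ℝ)) 3,
        ← Real.rpow_mul hε0.le]
      norm_num
    have he : ∀ p : ℝ, (ε⁻¹ : ℝ) ^ (3:ℕ) * ε ^ p = ε ^ (p - 3) := by
      intro p
      rw [hinv, ← Real.rpow_add hε0]
      ring_nf
    have hkey : (cfg.NN * ε⁻¹ ^ 3) * Bε = cfg.NN * (c1 * ε ^ (6 - cfg.α - 3) +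
        c2 * ε ^ (6 + cfg.α - 2 * κ - 3) + c3 * ε ^ (3 * κ - 3)) := by
      have e1 := he (6 - cfg.α)
      have e2 := he (6 + cfg.α - 2 * κ)
      have e3 := he (3 * κ)
      calc (cfg.NN * ε⁻¹ ^ 3) * Bε
          = cfg.NN * (c1 * ((ε⁻¹:ℝ) ^ (3:ℕ) * ε ^ (6 - cfg.α)) +
            c2 * ((ε⁻¹:ℝ) ^ (3:ℕ) * ε ^ (6 + cfg.α - 2 * κ)) +
            c3 * ((ε⁻¹:ℝ) ^ (3:ℕ) * ε ^ (3 * κ))) := by rw [hBεdef]; ring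
        _ = _ := by rw [e1, e2, e3]
    have hδ1 : δ ≤ 6 - cfg.α - 3 := by
      have := min_le_left (3 - cfg.α) (3 * (κ - 1))
      rw [hδdef]; linarith
    have hδ2 : δ ≤ 6 + cfg.α - 2 * κ - 3 := by
      have := min_le_left (3 - cfg.α) (3 * (κ - 1))
      rw [hδdef]; linarith [hκα]
    have hδ3 : δ ≤ 3 * κ - 3 := by
      have := min_le_right (3 - cfg.α) (3 * (κ - 1))
      rw [hδdef]; linarith
    have hrp : ∀ p : ℝ, δ ≤ p → ε ^ p ≤ ε ^ δ := fun p hp =>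
      Real.rpow_le_rpow_of_exponent_ge hε0 hεle1 hp
    have hεδ0 : (0:ℝ) ≤ ε ^ δ := Real.rpow_nonneg hε0.le δ
    have hfinal : cfg.NN * (c1 * ε ^ (6 - cfg.α - 3) +
        c2 * ε ^ (6 + cfg.α - 2 * κ - 3) + c3 * ε ^ (3 * κ - 3)) ≤ C * ε ^ δ := by
      have t1 := mul_le_mul_of_nonneg_left (hrp _ hδ1) hc1
      have t2 := mul_le_mul_of_nonneg_left (hrp _ hδ2) hc2
      have t3 := mul_le_mul_of_nonneg_left (hrp _ hδ3) hc3
      calc cfg.NN * (c1 * ε ^ (6 - cfg.α - 3) +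
          c2 * ε ^ (6 + cfg.α - 2 * κ - 3) + c3 * ε ^ (3 * κ - 3))
          ≤ cfg.NN * ((c1 + c2 + c3) * ε ^ δ) := by
            refine mul_le_mul_of_nonneg_left ?_ cfg.hNN.le
            have expand : (c1 + c2 + c3) * ε ^ δ =
                c1 * ε ^ δ + c2 * ε ^ δ + c3 * ε ^ δ := by ring
            rw [expand]
            linarith [t1, t2, t3]
        _ = (cfg.NN * (c1 + c2 + c3)) * ε ^ δ := by ring
        _ ≤ C * ε ^ δ := by
            refine mul_le_mul_of_nonneg_right ?_ hεδ0
            rw [hCdef]; linarith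
    calc (∫ x in cfg.dom ε, ‖fderiv ℝ F x‖ ^ 2)
        ≤ ∑ i : Fin (cfg.Nε ε),
            ∫ x in ball (cfg.xc ε i) (ε ^ κ) \ cfg.particle ε i, Hf i x := hIle
      _ ≤ (cfg.Nε ε : ℝ) * Bε := hsum_le
      _ ≤ (cfg.NN * ε⁻¹ ^ 3) * Bε := hfin1
      _ = _ := hkey
      _ ≤ C * ε ^ δ := hfinal

  refine ⟨C, hC, ε₁, hε₁pos, hε₁le, main, ?_⟩
  have hub : Tendsto (fun ε : ℝ => C * ε ^ δ) (𝓝[>] (0:ℝ)) (𝓝 0) := by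
    have hc : ContinuousAt (fun x : ℝ => x ^ δ) 0 :=
      Real.continuousAt_rpow_const 0 δ (Or.inr hδpos.le)
    have h0 : Tendsto (fun x : ℝ => x ^ δ) (𝓝 (0:ℝ)) (𝓝 0) := by
      have := hc.tendsto
      rwa [Real.zero_rpow hδpos.ne'] at this
    have h1 := (h0.mono_left (nhdsWithin_le_nhds : 𝓝[>] (0:ℝ) ≤ 𝓝 0)).const_mul C
    simpa using h1
  refine tendsto_of_tendsto_of_tendsto_of_le_of_le' tendsto_const_nhds hub ?_ ?_
  · exact Filter.Eventually.of_forall fun ε => integral_nonneg fun x => by positivity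
  · filter_upwards [Ioo_mem_nhdsGT_of_mem (Set.left_mem_Ico.2 hε₁pos)] with ε hε
    exact main ε hε.1 hε.2
end
end

section
/- Let 0 < b < a, m > 0, and for x = (x₁,x₂,x₃) outside the closed prolate spheroid define φ(x) = (4π a b² m/(a² − b²)^{3/2}) (artanh(t) − t) x₃, where t = √(a² − b²)/√(ξ(x)). Then there exist a constant c > 0 proportional to m a b² and a constant C > 0 depending only on a and b such that for all |x| ≥ 2a: |φ(x) − c x₃/|x|³| ≤ C m |x₃| a⁵/|x|⁵, and |∇φ(x)| ≤ C m a b²/|x|³. -/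
open MeasureTheory Filter Metric Set
open scoped RealInnerProductSpace ENNReal NNReal Topology

noncomputable section

/-- Inverse hyperbolic tangent. -/
def artanh (t : ℝ) : ℝ := (1 / 2) * Real.log ((1 + t) / (1 - t))

/-!
Outside the spheroid, `ξ` is the larger root of the quadratic
`ξ² - (r² + e²) ξ + e² x₃² = 0` (with `r = ‖x‖`, `e² = a² - b²`), so
`ξ = (r² + e² + √((r² + e²)² - 4 e² x₃²)) / 2` and `r² ≤ ξ ≤ r² + e²`. For `r ≥ 2a` the variable
`t = e / √ξ` is therefore at most `e / r ≤ 1/2`, and the Taylor expansion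
`artanh t - t = t³/3 + O(t⁵)` gives the dipole term `c x₃ / r³` with `c = 4π a b² m / 3`.
The gradient bound follows from the chain rule once `‖∇ξ‖ ≤ 4r`.
-/

lemma hasDerivAt_artanh_sub_self {t : ℝ} (h₁ : -1 < t) (h₂ : t < 1) :
    HasDerivAt (fun s => artanh s - s) (t ^ 2 / (1 - t ^ 2)) t := by
  simpa [artanh] using Real.hasDerivAt_half_log_one_add_div_one_sub_sub_sum_range 1 h₁ h₂

lemma abs_artanh_sub_self_sub_cube_le {t : ℝ} (ht : |t| ≤ 1 / 2) :
    |artanh t - t - t ^ 3 / 3| ≤ 4 / 3 * |t| ^ 5 := by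
  have ht2 : t ^ 2 ≤ 1 / 4 := by nlinarith [sq_abs t, abs_nonneg t]
  have h := Real.sum_range_sub_log_div_le (by linarith : |t| < 1) 2
  simp only [Finset.sum_range_succ, Finset.sum_range_zero] at h
  norm_num at h
  calc |artanh t - t - t ^ 3 / 3| = |1 / 2 * Real.log ((1 + t) / (1 - t)) - (t + t ^ 3 / 3)| := by
        rw [artanh, sub_sub]
    _ ≤ |t| ^ 5 / (1 - t ^ 2) := h
    _ ≤ 4 / 3 * |t| ^ 5 := by
        rw [div_le_iff₀ (by linarith)]
        nlinarith [pow_nonneg (abs_nonneg t) 5]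

lemma abs_artanh_sub_self_le {t : ℝ} (ht₀ : 0 ≤ t) (ht : t ≤ 1 / 2) :
    |artanh t - t| ≤ 2 / 3 * t ^ 3 := by
  have h := abs_artanh_sub_self_sub_cube_le (t := t) (by rwa [abs_of_nonneg ht₀])
  rw [abs_of_nonneg ht₀] at h
  have h5 : t ^ 5 ≤ t ^ 3 / 4 := by
    calc t ^ 5 = t ^ 3 * t ^ 2 := by ring
      _ ≤ t ^ 3 * (1 / 2) ^ 2 := by gcongr
      _ = t ^ 3 / 4 := by ring
  have h3 : 0 ≤ t ^ 3 := by positivity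
  rw [abs_le] at h ⊢
  constructor <;> linarith [h.1, h.2]

lemma hasDerivAt_const_div_sqrt (e : ℝ) {s : ℝ} (hs : 0 < s) :
    HasDerivAt (fun s => e / √s) (-(e / √s) / (2 * s)) s := by
  have hσ : 0 < √s := Real.sqrt_pos.2 hs
  refine ((hasDerivAt_const s e).div (Real.hasDerivAt_sqrt hs.ne') hσ.ne').congr_deriv ?_
  rw [Real.sq_sqrt hs.le]
  field_simp
  rw [Real.sq_sqrt hs.le]
  ring

lemma abs_artanh_sub_self_sub_cube_div_le {e r σ : ℝ} (he : 0 < e) (hr : 2 * e ≤ r)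
    (hrσ : r ≤ σ) (hσ : σ ^ 2 ≤ r ^ 2 + e ^ 2) :
    |artanh (e / σ) - e / σ - (e / r) ^ 3 / 3| ≤ 2 * (e / r) ^ 5 := by
  have hr₀ : 0 < r := by linarith
  have hσ₀ : 0 < σ := hr₀.trans_le hrσ
  set T := e / σ
  set ε := e / r
  have hT₀ : 0 ≤ T := by positivity
  have hTε : T ≤ ε := div_le_div_of_nonneg_left he.le hr₀ hrσ
  have hε : ε ≤ 1 / 2 := by rw [div_le_iff₀ hr₀]; linarith
  have hgap : ε ^ 2 - T ^ 2 ≤ ε ^ 4 := by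
    simp only [T, ε, div_pow]
    rw [div_sub_div _ _ (by positivity) (by positivity), div_le_div_iff₀ (by positivity)
      (by positivity)]
    have hr2 : r ^ 2 ≤ σ ^ 2 := by gcongr
    nlinarith [mul_le_mul_of_nonneg_left (sub_le_iff_le_add'.2 hσ) (by positivity :
      0 ≤ e ^ 2 * r ^ 4), mul_le_mul_of_nonneg_left hr2 (by positivity : 0 ≤ e ^ 4 * r ^ 2)]
  have hcube : ε ^ 3 - T ^ 3 ≤ 3 / 2 * ε ^ 5 := by
    have : ε ^ 3 - T ^ 3 ≤ 3 / 2 * ε * (ε ^ 2 - T ^ 2) := by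
      nlinarith [mul_nonneg (mul_nonneg (sub_nonneg.2 hTε) (sub_nonneg.2 hTε))
        (by positivity : 0 ≤ ε + 2 * T)]
    nlinarith
  have hcube₀ : T ^ 3 ≤ ε ^ 3 := by gcongr
  have htaylor := abs_artanh_sub_self_sub_cube_le (t := T) (by rw [abs_of_nonneg hT₀]; linarith)
  rw [abs_of_nonneg hT₀] at htaylor
  have h5 : T ^ 5 ≤ ε ^ 5 := by gcongr
  rw [abs_le] at htaylor ⊢
  constructor <;> nlinarith [htaylor.1, htaylor.2]

section Spheroidal

variable {F : Type*} [NormedAddCommGroup F] [InnerProductSpace ℝ F]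

/- With `e = √(a² - b²)` and `u` the unit vector of the long axis, `spheroidalCoord e u` is the
paper's `ξ` outside the spheroid, and `φ = 4π a b² m / e³ • prolatePotential e u`. -/

def spheroidalDisc (e : ℝ) (u y : F) : ℝ := (‖y‖ ^ 2 + e ^ 2) ^ 2 - 4 * e ^ 2 * ⟪u, y⟫ ^ 2

def spheroidalCoord (e : ℝ) (u y : F) : ℝ := (‖y‖ ^ 2 + e ^ 2 + √(spheroidalDisc e u y)) / 2

variable {e : ℝ} {u : F}

lemma abs_inner_le_norm_of_norm_le_one (hu : ‖u‖ ≤ 1) (y : F) : |⟪u, y⟫| ≤ ‖y‖ :=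
  (abs_real_inner_le_norm u y).trans (mul_le_of_le_one_left (norm_nonneg y) hu)

lemma sq_inner_le_sq_norm (hu : ‖u‖ ≤ 1) (y : F) : ⟪u, y⟫ ^ 2 ≤ ‖y‖ ^ 2 :=
  sq_le_sq' (abs_le.1 (abs_inner_le_norm_of_norm_le_one hu y)).1
    (abs_le.1 (abs_inner_le_norm_of_norm_le_one hu y)).2

lemma sq_sub_sq_le_spheroidalDisc (hu : ‖u‖ ≤ 1) (y : F) :
    (‖y‖ ^ 2 - e ^ 2) ^ 2 ≤ spheroidalDisc e u y := by
  have := mul_le_mul_of_nonneg_left (sq_inner_le_sq_norm hu y) (sq_nonneg (2 * e))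
  unfold spheroidalDisc
  linarith

lemma sq_norm_sub_sq_le_sqrt_spheroidalDisc (hu : ‖u‖ ≤ 1) (y : F) :
    ‖y‖ ^ 2 - e ^ 2 ≤ √(spheroidalDisc e u y) :=
  (le_abs_self _).trans (Real.abs_le_sqrt (sq_sub_sq_le_spheroidalDisc hu y))

lemma sqrt_spheroidalDisc_le (y : F) : √(spheroidalDisc e u y) ≤ ‖y‖ ^ 2 + e ^ 2 := by
  rw [Real.sqrt_le_left (by positivity)]
  unfold spheroidalDisc
  nlinarith [sq_nonneg e, sq_nonneg ⟪u, y⟫]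

lemma sq_norm_le_spheroidalCoord (hu : ‖u‖ ≤ 1) (y : F) : ‖y‖ ^ 2 ≤ spheroidalCoord e u y := by
  have := sq_norm_sub_sq_le_sqrt_spheroidalDisc (e := e) hu y
  unfold spheroidalCoord
  linarith

lemma le_sqrt_spheroidalCoord (hu : ‖u‖ ≤ 1) (y : F) : ‖y‖ ≤ √(spheroidalCoord e u y) :=
  Real.le_sqrt_of_sq_le (sq_norm_le_spheroidalCoord hu y)

lemma spheroidalCoord_le (y : F) : spheroidalCoord e u y ≤ ‖y‖ ^ 2 + e ^ 2 := by
  have := sqrt_spheroidalDisc_le (e := e) (u := u) y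
  unfold spheroidalCoord
  linarith

lemma eq_spheroidalCoord_of_root (hu : ‖u‖ ≤ 1) {y : F} {ξ : ℝ} (hξ : e ^ 2 < ξ)
    (hroot : (‖y‖ ^ 2 - ⟪u, y⟫ ^ 2) / (ξ - e ^ 2) + ⟪u, y⟫ ^ 2 / ξ = 1) :
    ξ = spheroidalCoord e u y := by
  have hquad : ξ ^ 2 - (‖y‖ ^ 2 + e ^ 2) * ξ + e ^ 2 * ⟪u, y⟫ ^ 2 = 0 := by
    have hξ₀ : 0 < ξ := lt_of_le_of_lt (sq_nonneg e) hξ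
    field_simp [(sub_pos.2 hξ).ne', hξ₀.ne'] at hroot
    linear_combination -hroot
  have hsq : √(spheroidalDisc e u y) ^ 2 = spheroidalDisc e u y :=
    Real.sq_sqrt ((sq_nonneg _).trans (sq_sub_sq_le_spheroidalDisc hu y))
  have hdisc : spheroidalDisc e u y = (‖y‖ ^ 2 + e ^ 2) ^ 2 - 4 * e ^ 2 * ⟪u, y⟫ ^ 2 := rfl
  -- the two roots are `spheroidalCoord e u y` and `‖y‖² + e² - spheroidalCoord e u y ≤ e²`
  have hfactor :
      (ξ - spheroidalCoord e u y) * (ξ - (‖y‖ ^ 2 + e ^ 2 - spheroidalCoord e u y)) = 0 := by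
    unfold spheroidalCoord
    linear_combination hquad - hsq / 4 - hdisc / 4
  have hsmall : ‖y‖ ^ 2 + e ^ 2 - spheroidalCoord e u y ≤ e ^ 2 := by
    have := sq_norm_le_spheroidalCoord (e := e) hu y
    linarith
  rcases mul_eq_zero.1 hfactor with h | h <;> linarith

lemma hasFDerivAt_sq_norm (x : F) :
    HasFDerivAt (fun y : F => ‖y‖ ^ 2) ((2 : ℝ) • innerSL ℝ x) x :=
  (hasStrictFDerivAt_norm_sq x).hasFDerivAt.congr_fderiv (by rw [two_nsmul, two_smul])

lemma hasFDerivAt_spheroidalDisc (x : F) :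
    HasFDerivAt (spheroidalDisc e u)
      ((4 * (‖x‖ ^ 2 + e ^ 2)) • innerSL ℝ x - (8 * e ^ 2 * ⟪u, x⟫) • innerSL ℝ u) x := by
  have hN := hasFDerivAt_sq_norm x
  have hz : HasFDerivAt (fun y : F => ⟪u, y⟫) (innerSL ℝ u) x := (innerSL ℝ u).hasFDerivAt
  refine (((hN.add_const (e ^ 2)).pow 2).sub ((hz.pow 2).const_mul (4 * e ^ 2))).congr_fderiv ?_
  ext v
  simp
  ring

lemma norm_fderiv_spheroidalDisc_le (hu : ‖u‖ ≤ 1) (x : F) :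
    ‖((4 * (‖x‖ ^ 2 + e ^ 2)) • innerSL ℝ x - (8 * e ^ 2 * ⟪u, x⟫) • innerSL ℝ u :
      F →L[ℝ] ℝ)‖ ≤
      4 * (‖x‖ ^ 2 + 3 * e ^ 2) * ‖x‖ := by
  have hz : |⟪u, x⟫| * ‖u‖ ≤ ‖x‖ := by
    simpa using mul_le_mul (abs_inner_le_norm_of_norm_le_one hu x) hu (norm_nonneg u)
      (norm_nonneg x)
  calc _ ≤ ‖(4 * (‖x‖ ^ 2 + e ^ 2)) • innerSL ℝ x‖ + ‖(8 * e ^ 2 * ⟪u, x⟫) • innerSL ℝ u‖ :=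
        norm_sub_le _ _
    _ = 4 * (‖x‖ ^ 2 + e ^ 2) * ‖x‖ + 8 * e ^ 2 * (|⟪u, x⟫| * ‖u‖) := by
        rw [norm_smul, norm_smul, innerSL_apply_norm, innerSL_apply_norm, Real.norm_eq_abs,
          Real.norm_eq_abs, abs_of_nonneg (by positivity), abs_mul, abs_of_nonneg (by positivity)]
        ring
    _ ≤ 4 * (‖x‖ ^ 2 + e ^ 2) * ‖x‖ + 8 * e ^ 2 * ‖x‖ := by gcongr
    _ = 4 * (‖x‖ ^ 2 + 3 * e ^ 2) * ‖x‖ := by ring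

lemma exists_hasFDerivAt_spheroidalCoord (hu : ‖u‖ ≤ 1) {x : F} (he : 0 < e)
    (hx : 2 * e ≤ ‖x‖) :
    ∃ L : F →L[ℝ] ℝ, HasFDerivAt (spheroidalCoord e u) L x ∧ ‖L‖ ≤ 4 * ‖x‖ := by
  set r := ‖x‖
  have hr : 0 < r := by linarith
  have hdisc : 3 / 4 * r ^ 2 ≤ √(spheroidalDisc e u x) := by
    have := sq_norm_sub_sq_le_sqrt_spheroidalDisc (e := e) hu x
    nlinarith
  have hdisc₀ : 0 < √(spheroidalDisc e u x) := lt_of_lt_of_le (by positivity) hdisc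
  have hN := hasFDerivAt_sq_norm x
  have hD := hasFDerivAt_spheroidalDisc (e := e) (u := u) x
  refine ⟨_, (((hN.add_const (e ^ 2)).add
    (hD.sqrt (Real.sqrt_pos.1 hdisc₀).ne')).const_mul (1 / 2 : ℝ)).congr_of_eventuallyEq ?_, ?_⟩
  · exact Filter.Eventually.of_forall fun y => by simp only [spheroidalCoord, Pi.add_apply]; ring
  · have hD' := norm_fderiv_spheroidalDisc_le (e := e) hu x
    have hinv : 1 / (2 * √(spheroidalDisc e u x)) ≤ 2 / (3 * r ^ 2) := by
      rw [div_le_div_iff₀ (by positivity) (by positivity)]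
      linarith
    have he2 : e ^ 2 ≤ r ^ 2 / 4 := by nlinarith
    have h₁ : ‖(2 : ℝ) • innerSL ℝ x‖ = 2 * r := by
      rw [norm_smul, innerSL_apply_norm, Real.norm_two]
    have h₂ : ‖(1 / (2 * √(spheroidalDisc e u x))) • ((4 * (‖x‖ ^ 2 + e ^ 2)) • innerSL ℝ x -
        (8 * e ^ 2 * ⟪u, x⟫) • innerSL ℝ u)‖ ≤ 2 / (3 * r ^ 2) * (7 * r ^ 3) := by
      rw [norm_smul, Real.norm_eq_abs, abs_of_pos (by positivity)]
      exact mul_le_mul hinv (hD'.trans (by nlinarith)) (norm_nonneg _) (by positivity)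
    calc _ ≤ 1 / 2 * (2 * r + 2 / (3 * r ^ 2) * (7 * r ^ 3)) := by
          rw [norm_smul, Real.norm_eq_abs, abs_of_pos (by norm_num)]
          gcongr
          exact (norm_add_le _ _).trans (by rw [h₁]; gcongr)
      _ ≤ 4 * r := by
          field_simp
          linarith

def prolatePotential (e : ℝ) (u y : F) : ℝ :=
  (artanh (e / √(spheroidalCoord e u y)) - e / √(spheroidalCoord e u y)) * ⟪u, y⟫

lemma abs_prolatePotential_sub_le (hu : ‖u‖ ≤ 1) (he : 0 < e) {x : F} (hx : 2 * e ≤ ‖x‖) :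
    |prolatePotential e u x - e ^ 3 / 3 * ⟪u, x⟫ / ‖x‖ ^ 3| ≤ 2 * e ^ 5 * |⟪u, x⟫| / ‖x‖ ^ 5 := by
  have hσ : √(spheroidalCoord e u x) ^ 2 ≤ ‖x‖ ^ 2 + e ^ 2 := by
    rw [Real.sq_sqrt ((sq_nonneg _).trans (sq_norm_le_spheroidalCoord hu x))]
    exact spheroidalCoord_le x
  have h := abs_artanh_sub_self_sub_cube_div_le he hx (le_sqrt_spheroidalCoord hu x) hσ
  rw [div_pow, div_pow] at h
  calc _ = |(artanh (e / √(spheroidalCoord e u x)) - e / √(spheroidalCoord e u x) -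
        e ^ 3 / ‖x‖ ^ 3 / 3) * ⟪u, x⟫| := by rw [prolatePotential]; ring_nf
    _ ≤ 2 * (e ^ 5 / ‖x‖ ^ 5) * |⟪u, x⟫| := by rw [abs_mul]; gcongr
    _ = 2 * e ^ 5 * |⟪u, x⟫| / ‖x‖ ^ 5 := by ring

lemma exists_hasFDerivAt_prolatePotential (hu : ‖u‖ ≤ 1) (he : 0 < e) {x : F}
    (hx : 2 * e ≤ ‖x‖) :
    ∃ L : F →L[ℝ] ℝ, HasFDerivAt (prolatePotential e u) L x ∧ ‖L‖ ≤ 4 * e ^ 3 / ‖x‖ ^ 3 := by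
  obtain ⟨Lg, hg, hLg⟩ := exists_hasFDerivAt_spheroidalCoord hu he hx
  set r := ‖x‖
  set s := spheroidalCoord e u x
  set T := e / √s
  have hr : 0 < r := by linarith
  have hrs : r ^ 2 ≤ s := sq_norm_le_spheroidalCoord hu x
  have hs : 0 < s := lt_of_lt_of_le (by positivity) hrs
  have hT₀ : 0 ≤ T := by positivity
  have hTr : T ≤ e / r := div_le_div_of_nonneg_left he.le hr (le_sqrt_spheroidalCoord hu x)
  have hT : T ≤ 1 / 2 := hTr.trans (by rw [div_le_iff₀ hr]; linarith)
  have hprofile : HasDerivAt (fun s => artanh (e / √s) - e / √s)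
      (T ^ 2 / (1 - T ^ 2) * (-T / (2 * s))) s :=
    (hasDerivAt_artanh_sub_self (by linarith) (by linarith)).comp s
      (hasDerivAt_const_div_sqrt e hs)
  refine ⟨_, (hprofile.comp_hasFDerivAt x hg).mul (innerSL ℝ u).hasFDerivAt, ?_⟩
  have hc : |T ^ 2 / (1 - T ^ 2) * (-T / (2 * s))| ≤ 2 / 3 * T ^ 3 / r ^ 2 := by
    have hT2 : 3 / 4 ≤ 1 - T ^ 2 := by nlinarith
    rw [show T ^ 2 / (1 - T ^ 2) * (-T / (2 * s)) = -(T ^ 3 / ((1 - T ^ 2) * (2 * s))) by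
        rw [neg_div, mul_neg, div_mul_div_comm]; ring,
      abs_neg, abs_of_nonneg (by positivity), div_le_div_iff₀ (by positivity) (by positivity)]
    have : r ^ 2 ≤ 2 / 3 * ((1 - T ^ 2) * (2 * s)) := by nlinarith
    nlinarith [pow_nonneg hT₀ 3]
  have hvalue : |artanh T - T| ≤ 2 / 3 * T ^ 3 := abs_artanh_sub_self_le hT₀ hT
  calc _ ≤ |artanh T - T| * ‖u‖ +
        |⟪u, x⟫| * (|T ^ 2 / (1 - T ^ 2) * (-T / (2 * s))| * ‖Lg‖) := by
        refine (norm_add_le _ _).trans_eq ?_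
        rw [norm_smul, norm_smul, norm_smul, Real.norm_eq_abs, Real.norm_eq_abs, Real.norm_eq_abs,
          innerSL_apply_norm]
        rfl
    _ ≤ 2 / 3 * T ^ 3 * 1 + r * (2 / 3 * T ^ 3 / r ^ 2 * (4 * r)) := by
        gcongr
        exact abs_inner_le_norm_of_norm_le_one hu x
    _ = 10 / 3 * T ^ 3 := by field_simp; ring
    _ ≤ 4 * (e / r) ^ 3 := by
        have : T ^ 3 ≤ (e / r) ^ 3 := by gcongr
        nlinarith [pow_nonneg hT₀ 3]
    _ = 4 * e ^ 3 / r ^ 3 := by rw [div_pow]; ring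

end Spheroidal

lemma norm_sq_eq_E3 (y : E3) : ‖y‖ ^ 2 = y 0 ^ 2 + y 1 ^ 2 + y 2 ^ 2 := by
  simp [EuclideanSpace.norm_sq_eq, Fin.sum_univ_three]

lemma inner_single_two_E3 (y : E3) : ⟪EuclideanSpace.single 2 1, y⟫ = y 2 := by
  simp [EuclideanSpace.inner_single_left]

lemma notMem_sph_of_lt_norm {a b : ℝ} (hb : 0 < b) (hba : b < a) {y : E3} (hy : a < ‖y‖) :
    y ∉ sph b a := by
  have ha : 0 < a := hb.trans hba
  have hy2 : 1 < ‖y‖ ^ 2 / a ^ 2 := by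
    rw [one_lt_div (by positivity)]
    exact pow_lt_pow_left₀ hy ha.le two_ne_zero
  have hb2 : b ^ 2 ≤ a ^ 2 := by gcongr
  have h0 : y 0 ^ 2 / a ^ 2 ≤ y 0 ^ 2 / b ^ 2 := by gcongr
  have h1 : y 1 ^ 2 / a ^ 2 ≤ y 1 ^ 2 / b ^ 2 := by gcongr
  rw [norm_sq_eq_E3, add_div, add_div] at hy2
  intro hmem
  have : y 0 ^ 2 / b ^ 2 + y 1 ^ 2 / b ^ 2 + y 2 ^ 2 / a ^ 2 ≤ 1 := hmem
  linarith

lemma eq_spheroidalCoord_of_root_E3 {a b ξ : ℝ} (hb : 0 ≤ b) (hba : b < a) {y : E3} (hξ : a ^ 2 < ξ)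
    (hroot : ((y 0) ^ 2 + (y 1) ^ 2) / (ξ + b ^ 2 - a ^ 2) + (y 2) ^ 2 / ξ = 1) :
    ξ = spheroidalCoord √(a ^ 2 - b ^ 2) (EuclideanSpace.single 2 1) y := by
  have he : √(a ^ 2 - b ^ 2) ^ 2 = a ^ 2 - b ^ 2 := Real.sq_sqrt (by nlinarith)
  refine eq_spheroidalCoord_of_root (by simp) (by nlinarith) ?_
  rw [inner_single_two_E3, he, norm_sq_eq_E3]
  convert hroot using 3 <;> ring

lemma eventuallyEq_spheroidalCoord {a b : ℝ} (hb : 0 < b) (hba : b < a) {ξf : E3 → ℝ}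
    (hξ : ∀ x : E3, x ∉ sph b a →
      a ^ 2 < ξf x ∧
        ((x 0) ^ 2 + (x 1) ^ 2) / (ξf x + b ^ 2 - a ^ 2) + (x 2) ^ 2 / ξf x = 1)
    {x : E3} (hx : a < ‖x‖) :
    ξf =ᶠ[𝓝 x] spheroidalCoord √(a ^ 2 - b ^ 2) (EuclideanSpace.single 2 1) := by
  filter_upwards [isOpen_lt continuous_const continuous_norm |>.mem_nhds hx] with y hy
  obtain ⟨hξ₁, hξ₂⟩ := hξ y (notMem_sph_of_lt_norm hb hba hy)
  exact eq_spheroidalCoord_of_root_E3 hb.le hba hξ₁ hξ₂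

/-- far-field expansion of the magnetostatic potential of a uniformly
magnetized prolate spheroid. Let `0 < b < a`, `m > 0`, and for `x` outside the closed
prolate spheroid let `ξf x` be the exterior spheroidal coordinate, i.e. the unique root
`ξ > a²` of `ρ²/(ξ + b² − a²) + x₃²/ξ = 1`.  Define
`φ(x) = (4π a b² m/(a² − b²)^{3/2}) (artanh t − t) x₃` with `t = √(a² − b²)/√(ξf x)`.
Then there are a constant `c > 0` proportional to `m a b²` and a constant `C > 0`
depending only on `a` and `b` such that for all `|x| ≥ 2a`:
`|φ(x) − c x₃/|x|³| ≤ C m |x₃| a⁵/|x|⁵` and `|∇φ(x)| ≤ C m a b²/|x|³`. -/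
theorem stmt16 (a b m : ℝ) (hb : 0 < b) (hba : b < a) (hm : 0 < m)
    (ξf : E3 → ℝ)
    (hξ : ∀ x : E3, x ∉ sph b a →
      a ^ 2 < ξf x ∧
        ((x 0) ^ 2 + (x 1) ^ 2) / (ξf x + b ^ 2 - a ^ 2) + (x 2) ^ 2 / ξf x = 1) :
    ∃ c C : ℝ, 0 < C ∧ (∃ k : ℝ, 0 < k ∧ c = k * (m * a * b ^ 2)) ∧ 0 < c ∧
      ∀ x : E3, 2 * a ≤ ‖x‖ →
        |(fun y : E3 => 4 * Real.pi * a * b ^ 2 * m / (a ^ 2 - b ^ 2) ^ ((3 : ℝ) / 2) *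
              (artanh (Real.sqrt (a ^ 2 - b ^ 2) / Real.sqrt (ξf y)) -
                Real.sqrt (a ^ 2 - b ^ 2) / Real.sqrt (ξf y)) * y 2) x -
            c * x 2 / ‖x‖ ^ 3| ≤ C * m * |x 2| * a ^ 5 / ‖x‖ ^ 5 ∧
        ‖fderiv ℝ (fun y : E3 => 4 * Real.pi * a * b ^ 2 * m / (a ^ 2 - b ^ 2) ^ ((3 : ℝ) / 2) *
              (artanh (Real.sqrt (a ^ 2 - b ^ 2) / Real.sqrt (ξf y)) -
                Real.sqrt (a ^ 2 - b ^ 2) / Real.sqrt (ξf y)) * y 2) x‖ ≤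
          C * m * a * b ^ 2 / ‖x‖ ^ 3 := by
  have ha : 0 < a := hb.trans hba
  have hab : 0 < a ^ 2 - b ^ 2 := by nlinarith
  set e := √(a ^ 2 - b ^ 2)
  set u : E3 := EuclideanSpace.single 2 1
  set K := 4 * Real.pi * a * b ^ 2 * m / (a ^ 2 - b ^ 2) ^ ((3 : ℝ) / 2)
  have he : 0 < e := Real.sqrt_pos.2 hab
  have hea : e < a := by rw [Real.sqrt_lt' ha]; nlinarith
  have hpow : (a ^ 2 - b ^ 2) ^ ((3 : ℝ) / 2) = e ^ 3 := by
    rw [Real.rpow_div_two_eq_sqrt 3 hab.le]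
    norm_cast
  have hK : 0 < K := by simp only [K, hpow]; positivity
  have hKe : K * e ^ 3 = 4 * Real.pi * a * b ^ 2 * m := by simp only [K, hpow]; field_simp
  refine ⟨K * e ^ 3 / 3, 16 * Real.pi, by positivity,
    ⟨4 * Real.pi / 3, by positivity, by rw [hKe]; ring⟩, by positivity, fun x hx => ?_⟩
  have hex : 2 * e ≤ ‖x‖ := by linarith
  have hu : ‖u‖ ≤ 1 := by simp [u]
  have hφ : (fun y : E3 => K * (artanh (e / √(ξf y)) - e / √(ξf y)) * y 2) =ᶠ[𝓝 x]
      fun y => K * prolatePotential e u y := by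
    filter_upwards [eventuallyEq_spheroidalCoord hb hba hξ (by linarith : a < ‖x‖)] with y hy
    rw [prolatePotential, inner_single_two_E3, hy, mul_assoc]
  obtain ⟨L, hL, hL_norm⟩ := exists_hasFDerivAt_prolatePotential hu he hex
  have hψ := abs_prolatePotential_sub_le hu he hex
  rw [inner_single_two_E3] at hψ
  constructor
  · beta_reduce
    calc _ = K * |prolatePotential e u x - e ^ 3 / 3 * x 2 / ‖x‖ ^ 3| := by
          rw [hφ.eq_of_nhds, ← abs_of_pos hK, ← abs_mul, abs_of_pos hK]
          ring_nf
      _ ≤ K * (2 * e ^ 5 * |x 2| / ‖x‖ ^ 5) := by gcongr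
      _ = 8 * Real.pi * m * |x 2| * (a * b ^ 2 * e ^ 2) / ‖x‖ ^ 5 := by
          linear_combination (2 * e ^ 2 * |x 2| / ‖x‖ ^ 5) * hKe
      _ ≤ 8 * Real.pi * m * |x 2| * (a * a ^ 2 * a ^ 2) / ‖x‖ ^ 5 := by gcongr
      _ ≤ 16 * Real.pi * m * |x 2| * a ^ 5 / ‖x‖ ^ 5 := by
          rw [← pow_succ', ← pow_add]
          gcongr
          norm_num
  · rw [hφ.fderiv_eq, (hL.const_mul K).fderiv, norm_smul, Real.norm_of_nonneg hK.le]
    calc K * ‖L‖ ≤ K * (4 * e ^ 3 / ‖x‖ ^ 3) := by gcongr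
      _ = 16 * Real.pi * m * a * b ^ 2 / ‖x‖ ^ 3 := by
          linear_combination (4 / ‖x‖ ^ 3) * hKe
end
end
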